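/- arXiv:1204.1211 — 13 statements merged into one kernel-verified Lean document; each statement's English description precedes it below -/
import Mathlib

section
/- Let K be a generalized curvature tensor on a finite-dimensional real inner product space V, and let b be a symmetric bilinear form on V (equivalently a self-adjoint endomorphism B) that is K-compatible, i.e. K(BX,Y,Z,W) + K(BY,Z,X,W) + K(BZ,X,Y,W) = 0 for all X,Y,Z,W (where K is evaluated with b raised via the metric). Then the tensor K̂(X,Y,Z,W) := K(X,Y,BZ,BW) is again a generalized curvature tensor (has all the symmetries of Definition of K-tensor). -/
/-!
The Bianchi identity of `K` moves `B` from the third slot of `K(X,Y,BZ,W)` to the first,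
which turns the cyclic sum of `K̂` into the difference of two compatibility sums, so `K̂`
satisfies the Bianchi identity. The antisymmetries of `K̂` are those of `K`, and, as for any
tensor, the two antisymmetries and the Bianchi identity force the pair symmetry.
-/

open RealInnerProductSpace

theorem pair_symm_of_antisymm_of_bianchi {α 𝕜 : Type*} [Field 𝕜] [CharZero 𝕜]
    (R : α → α → α → α → 𝕜)
    (h1 : ∀ X Y Z W, R X Y Z W = - R Y X Z W)
    (h2 : ∀ X Y Z W, R X Y Z W = - R X Y W Z)
    (hb : ∀ X Y Z W, R X Y Z W + R Y Z X W + R Z X Y W = 0) (X Y Z W : α) :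
    R X Y Z W = R Z W X Y := by
  linear_combination (hb X Y Z W + hb Y Z W X - hb Z W X Y - hb W X Y Z
    - h1 Z X Y W - h2 Y Z W X - h2 Z W Y X - h1 W Y Z X + h2 Y W Z X
    + h1 W X Z Y - h2 X W Z Y + h2 X Z W Y + h1 W X Y Z + h2 X Y W Z) / 2

theorem bianchi_comp_of_compatible {α G : Type*} [AddCommGroup G]
    (R : α → α → α → α → G) (f : α → α)
    (h1 : ∀ X Y Z W, R X Y Z W = - R Y X Z W)
    (hb : ∀ X Y Z W, R X Y Z W + R Y Z X W + R Z X Y W = 0)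
    (hf : ∀ X Y Z W, R (f X) Y Z W + R (f Y) Z X W + R (f Z) X Y W = 0) (X Y Z W : α) :
    R X Y (f Z) W + R Y Z (f X) W + R Z X (f Y) W = 0 := by
  have move (X Y Z : α) : R X Y (f Z) W = R (f Z) Y X W - R (f Z) X Y W := by
    have bianchi := hb X Y (f Z) W
    rw [h1 Y (f Z) X W] at bianchi
    rw [← sub_eq_zero, ← bianchi]
    abel
  calc _ = (R (f Z) Y X W + R (f Y) X Z W + R (f X) Z Y W)
        - (R (f X) Y Z W + R (f Y) Z X W + R (f Z) X Y W) := by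
          rw [move X Y Z, move Y Z X, move Z X Y]
          abel
    _ = 0 := by rw [hf, hf, sub_zero]

theorem hatK_is_generalized_curvature_general
    {V : Type*} [NormedAddCommGroup V] [InnerProductSpace ℝ V]
    (K : V →ₗ[ℝ] V →ₗ[ℝ] V →ₗ[ℝ] V →ₗ[ℝ] ℝ)
    (hanti1 : ∀ X Y Z W : V, K X Y Z W = - K Y X Z W)
    (hanti2 : ∀ X Y Z W : V, K X Y Z W = - K X Y W Z)
    (hbianchi : ∀ X Y Z W : V, K X Y Z W + K Y Z X W + K Z X Y W = 0)
    (B : V →ₗ[ℝ] V)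
    (hcompat : ∀ X Y Z W : V, K (B X) Y Z W + K (B Y) Z X W + K (B Z) X Y W = 0) :
    (∀ X Y Z W : V, K X Y (B Z) (B W) = - K Y X (B Z) (B W)) ∧
    (∀ X Y Z W : V, K X Y (B Z) (B W) = - K X Y (B W) (B Z)) ∧
    (∀ X Y Z W : V, K X Y (B Z) (B W) = K Z W (B X) (B Y)) ∧
    (∀ X Y Z W : V, K X Y (B Z) (B W) + K Y Z (B X) (B W) + K Z X (B Y) (B W) = 0) := by
  have anti1 (X Y Z W : V) := hanti1 X Y (B Z) (B W)
  have anti2 (X Y Z W : V) := hanti2 X Y (B Z) (B W)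
  have bianchi (X Y Z W : V) :=
    bianchi_comp_of_compatible (fun X Y Z W => K X Y Z W) B hanti1 hbianchi hcompat X Y Z (B W)
  exact ⟨anti1, anti2,
    pair_symm_of_antisymm_of_bianchi (fun X Y Z W => K X Y (B Z) (B W)) anti1 anti2 bianchi,
    bianchi⟩

/-- If `K` is a generalized curvature tensor on a finite-dimensional real inner product
space and `B` is a self-adjoint endomorphism (the operator of a symmetric bilinear form
`b`) that is `K`-compatible, then `K̂(X,Y,Z,W) := K(X,Y,BZ,BW)` is again a generalized
curvature tensor: it has both antisymmetries, the pair symmetry and the first Bianchi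
identity. -/
theorem hatK_is_generalized_curvature
    {V : Type*} [NormedAddCommGroup V] [InnerProductSpace ℝ V] [FiniteDimensional ℝ V]
    (K : V →ₗ[ℝ] V →ₗ[ℝ] V →ₗ[ℝ] V →ₗ[ℝ] ℝ)
    (hanti1 : ∀ X Y Z W : V, K X Y Z W = - K Y X Z W)
    (hanti2 : ∀ X Y Z W : V, K X Y Z W = - K X Y W Z)
    (hpair : ∀ X Y Z W : V, K X Y Z W = K Z W X Y)
    (hbianchi : ∀ X Y Z W : V, K X Y Z W + K Y Z X W + K Z X Y W = 0)
    (B : V →ₗ[ℝ] V)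
    (hB : ∀ X Y : V, ⟪B X, Y⟫ = ⟪X, B Y⟫)
    (hcompat : ∀ X Y Z W : V, K (B X) Y Z W + K (B Y) Z X W + K (B Z) X Y W = 0) :
    (∀ X Y Z W : V, K X Y (B Z) (B W) = - K Y X (B Z) (B W)) ∧
    (∀ X Y Z W : V, K X Y (B Z) (B W) = - K X Y (B W) (B Z)) ∧
    (∀ X Y Z W : V, K X Y (B Z) (B W) = K Z W (B X) (B Y)) ∧
    (∀ X Y Z W : V, K X Y (B Z) (B W) + K Y Z (B X) (B W) + K Z X (B Y) (B W) = 0) :=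
  hatK_is_generalized_curvature_general K hanti1 hanti2 hbianchi B hcompat
end

section
/- Let K be a generalized curvature tensor on a finite-dimensional real inner product space V and let B be a self-adjoint endomorphism that is K-compatible. If X, Y, Z are eigenvectors of B with eigenvalues λ, μ, ν such that λ ≠ ν and μ ≠ ν, then K(X,Y,Z,W) = 0 for all W ∈ V. -/
/-! Bianchi's identity and `B`-compatibility, evaluated at `(X, Y, Z)` and at `(X, Z, Y)`, give three
linear relations among the cyclic values `K(X,Y,Z)`, `K(Y,Z,X)`, `K(Z,X,Y)`. Eliminating the last
leaves `q • K(X,Y,Z) = 0` with `q = x² - xy + y²`, `x = λ - ν`, `y = μ - ν`, a positive definite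
quadratic form, so `q ≠ 0` as soon as `λ ≠ ν`. -/

theorem sq_sub_mul_add_sq_ne_zero {R : Type*} [CommRing R] [LinearOrder R] [IsStrictOrderedRing R]
    {x : R} (y : R) (hx : x ≠ 0) : x ^ 2 - x * y + y ^ 2 ≠ 0 := by
  have hx2 : 0 < x ^ 2 := by positivity
  -- `4 (x² - xy + y²) = (2y - x)² + 3x²`
  nlinarith [sq_nonneg (2 * y - x)]

section Compatible

variable {𝕜 V M : Type*} [Field 𝕜] [LinearOrder 𝕜] [IsStrictOrderedRing 𝕜]
  [AddCommGroup V] [Module 𝕜 V] [AddCommGroup M] [Module 𝕜 M]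

theorem eq_zero_of_cyclic_relations {a b c : M} {lam mu nu : 𝕜} (h₁ : a + b + c = 0)
    (h₂ : lam • a + mu • b + nu • c = 0) (h₃ : mu • a + nu • b + lam • c = 0)
    (hln : lam ≠ nu) : a = 0 := by
  have key : ((lam - nu) ^ 2 - (lam - nu) * (mu - nu) + (mu - nu) ^ 2) • a = 0 := by
    linear_combination (norm := module)
      (lam - nu) • h₂ + (mu - nu) • h₃ - ((lam - nu) * nu + (mu - nu) * lam) • h₁
  exact (smul_eq_zero.mp key).resolve_left
    (sq_sub_mul_add_sq_ne_zero _ (sub_ne_zero.mpr hln))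

theorem LinearMap.apply_eigenvectors_eq_zero_of_compatible
    (T : V →ₗ[𝕜] V →ₗ[𝕜] V →ₗ[𝕜] M) (B : V →ₗ[𝕜] V)
    (hanti : ∀ X Y Z : V, T X Y Z = -T Y X Z)
    (hbianchi : ∀ X Y Z : V, T X Y Z + T Y Z X + T Z X Y = 0)
    (hcompat : ∀ X Y Z : V, T (B X) Y Z + T (B Y) Z X + T (B Z) X Y = 0)
    {X Y Z : V} {lam mu nu : 𝕜} (hX : B X = lam • X) (hY : B Y = mu • Y) (hZ : B Z = nu • Z)
    (hln : lam ≠ nu) : T X Y Z = 0 := by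
  have h₂ := hcompat X Y Z
  have h₃ := hcompat X Z Y
  simp only [hX, hY, hZ, map_smul, LinearMap.smul_apply] at h₂ h₃
  rw [hanti X Z, hanti Z Y, hanti Y X] at h₃
  refine eq_zero_of_cyclic_relations (hbianchi X Y Z) h₂ ?_ hln
  linear_combination (norm := module) -h₃

end Compatible

open RealInnerProductSpace

theorem derdzinski_shen_extended_general
    {V : Type*} [NormedAddCommGroup V] [InnerProductSpace ℝ V]
    (K : V →ₗ[ℝ] V →ₗ[ℝ] V →ₗ[ℝ] V →ₗ[ℝ] ℝ)
    (hanti1 : ∀ X Y Z W : V, K X Y Z W = - K Y X Z W)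
    (hbianchi : ∀ X Y Z W : V, K X Y Z W + K Y Z X W + K Z X Y W = 0)
    (B : V →ₗ[ℝ] V)
    (hcompat : ∀ X Y Z W : V, K (B X) Y Z W + K (B Y) Z X W + K (B Z) X Y W = 0)
    (X Y Z : V) (lam mu nu : ℝ)
    (hX : B X = lam • X) (hY : B Y = mu • Y) (hZ : B Z = nu • Z)
    (hln : lam ≠ nu) :
    ∀ W : V, K X Y Z W = 0 := by
  have hK : K X Y Z = 0 :=
    K.apply_eigenvectors_eq_zero_of_compatible B
      (fun X Y Z ↦ LinearMap.ext (hanti1 X Y Z))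
      (fun X Y Z ↦ LinearMap.ext (hbianchi X Y Z))
      (fun X Y Z ↦ LinearMap.ext (hcompat X Y Z)) hX hY hZ hln
  exact fun W ↦ LinearMap.congr_fun hK W

/-- Extended Derdzinski–Shen theorem: if `K` is a generalized curvature tensor, `B` a
self-adjoint `K`-compatible endomorphism, and `X, Y, Z` are eigenvectors of `B` with
eigenvalues `λ, μ, ν` such that `λ ≠ ν` and `μ ≠ ν`, then `K(X,Y,Z,W) = 0` for all `W`. -/
theorem derdzinski_shen_extended
    {V : Type*} [NormedAddCommGroup V] [InnerProductSpace ℝ V] [FiniteDimensional ℝ V]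
    (K : V →ₗ[ℝ] V →ₗ[ℝ] V →ₗ[ℝ] V →ₗ[ℝ] ℝ)
    (hanti1 : ∀ X Y Z W : V, K X Y Z W = - K Y X Z W)
    (hanti2 : ∀ X Y Z W : V, K X Y Z W = - K X Y W Z)
    (hpair : ∀ X Y Z W : V, K X Y Z W = K Z W X Y)
    (hbianchi : ∀ X Y Z W : V, K X Y Z W + K Y Z X W + K Z X Y W = 0)
    (B : V →ₗ[ℝ] V)
    (hB : ∀ X Y : V, ⟪B X, Y⟫ = ⟪X, B Y⟫)
    (hcompat : ∀ X Y Z W : V, K (B X) Y Z W + K (B Y) Z X W + K (B Z) X Y W = 0)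
    (X Y Z : V) (lam mu nu : ℝ)
    (hX : B X = lam • X) (hY : B Y = mu • Y) (hZ : B Z = nu • Z)
    (hln : lam ≠ nu) (hmn : mu ≠ nu) :
    ∀ W : V, K X Y Z W = 0 :=
  derdzinski_shen_extended_general K hanti1 hbianchi B hcompat X Y Z lam mu nu hX hY hZ hln
end

section
/- Let R be a generalized curvature tensor on a finite-dimensional real inner product space and B a self-adjoint endomorphism that is R-compatible. Then B commutes with the Ricci contraction of R: writing Ric(X,Y) = Σₐ R(eₐ, X, Y, eₐ) for an orthonormal basis (eₐ), one has Ric(BX, Y) = Ric(X, BY) for all X, Y. -/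
open RealInnerProductSpace

/-!
Compatibility with `Z = W = eₐ`, summed over `a`, gives `∑ₐ R(Beₐ, X, Y, eₐ) = Ric(BY, X)`.
Moving `B` to the last slot by self-adjointness and using the pair symmetry shows that the
left side is symmetric in `X` and `Y`; since `Ric` is symmetric, `Ric(BX, Y) = Ric(X, BY)`.
-/

section Ricci

variable {V ι : Type*} [NormedAddCommGroup V] [InnerProductSpace ℝ V] [Fintype ι]

theorem LinearMap.IsSymmetric.sum_bilin_map_left_eq_right {B : V →ₗ[ℝ] V} (hB : B.IsSymmetric)
    (e : OrthonormalBasis ι ℝ V) (T : V →ₗ[ℝ] V →ₗ[ℝ] ℝ) :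
    ∑ a, T (B (e a)) (e a) = ∑ a, T (e a) (B (e a)) :=
  calc ∑ a, T (B (e a)) (e a)
      = ∑ a, ∑ b, ⟪e b, B (e a)⟫ * T (e b) (e a) := by
        refine Finset.sum_congr rfl fun a _ => ?_
        conv_lhs => rw [← e.sum_repr' (B (e a))]
        simp only [map_sum, map_smul, LinearMap.sum_apply, LinearMap.smul_apply, smul_eq_mul]
    _ = ∑ b, ∑ a, ⟪e a, B (e b)⟫ * T (e b) (e a) := by
        rw [Finset.sum_comm]
        refine Finset.sum_congr rfl fun b _ => Finset.sum_congr rfl fun a _ => ?_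
        rw [← hB, real_inner_comm]
    _ = ∑ b, T (e b) (B (e b)) := by
        refine Finset.sum_congr rfl fun b _ => ?_
        conv_rhs => rw [← e.sum_repr' (B (e b))]
        simp only [map_sum, map_smul, smul_eq_mul]

noncomputable def ricci (e : OrthonormalBasis ι ℝ V)
    (R : V →ₗ[ℝ] V →ₗ[ℝ] V →ₗ[ℝ] V →ₗ[ℝ] ℝ) (X Y : V) : ℝ :=
  ∑ a, R (e a) X Y (e a)

variable (R : V →ₗ[ℝ] V →ₗ[ℝ] V →ₗ[ℝ] V →ₗ[ℝ] ℝ)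

theorem curvature_apply_reverse (hanti1 : ∀ X Y Z W : V, R X Y Z W = - R Y X Z W)
    (hanti2 : ∀ X Y Z W : V, R X Y Z W = - R X Y W Z)
    (hpair : ∀ X Y Z W : V, R X Y Z W = R Z W X Y) (A X Y C : V) :
    R A X Y C = R C Y X A := by
  rw [hpair, hanti1, hanti2, neg_neg]

theorem ricci_comm (e : OrthonormalBasis ι ℝ V)
    (hanti1 : ∀ X Y Z W : V, R X Y Z W = - R Y X Z W)
    (hanti2 : ∀ X Y Z W : V, R X Y Z W = - R X Y W Z)
    (hpair : ∀ X Y Z W : V, R X Y Z W = R Z W X Y) (X Y : V) :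
    ricci e R X Y = ricci e R Y X :=
  Finset.sum_congr rfl fun _ _ => curvature_apply_reverse R hanti1 hanti2 hpair _ _ _ _

theorem sum_apply_map_basis_eq_ricci (e : OrthonormalBasis ι ℝ V)
    (hanti1 : ∀ X Y Z W : V, R X Y Z W = - R Y X Z W)
    (hanti2 : ∀ X Y Z W : V, R X Y Z W = - R X Y W Z) {B : V →ₗ[ℝ] V}
    (hcompat : ∀ X Y Z W : V, R (B X) Y Z W + R (B Y) Z X W + R (B Z) X Y W = 0) (X Y : V) :
    ∑ a, R (B (e a)) X Y (e a) = ricci e R (B Y) X := by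
  refine Finset.sum_congr rfl fun a _ => ?_
  have hcompat_a := hcompat X Y (e a) (e a)
  have hvanish := hanti2 (B X) Y (e a) (e a)
  have hswap := hanti1 (B Y) (e a) X (e a)
  linarith

theorem sum_apply_map_basis_comm (e : OrthonormalBasis ι ℝ V)
    (hanti1 : ∀ X Y Z W : V, R X Y Z W = - R Y X Z W)
    (hanti2 : ∀ X Y Z W : V, R X Y Z W = - R X Y W Z)
    (hpair : ∀ X Y Z W : V, R X Y Z W = R Z W X Y) {B : V →ₗ[ℝ] V} (hB : B.IsSymmetric)
    (X Y : V) :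
    ∑ a, R (B (e a)) X Y (e a) = ∑ a, R (B (e a)) Y X (e a) := by
  refine (hB.sum_bilin_map_left_eq_right e ((R.flip X).flip Y)).trans ?_
  exact Finset.sum_congr rfl fun _ _ => curvature_apply_reverse R hanti1 hanti2 hpair _ _ _ _

end Ricci

theorem ricci_commutes_of_compatible_general
    {V : Type*} [NormedAddCommGroup V] [InnerProductSpace ℝ V]
    (e : OrthonormalBasis (Fin (Module.finrank ℝ V)) ℝ V)
    (R : V →ₗ[ℝ] V →ₗ[ℝ] V →ₗ[ℝ] V →ₗ[ℝ] ℝ)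
    (hanti1 : ∀ X Y Z W : V, R X Y Z W = - R Y X Z W)
    (hanti2 : ∀ X Y Z W : V, R X Y Z W = - R X Y W Z)
    (hpair : ∀ X Y Z W : V, R X Y Z W = R Z W X Y)
    (B : V →ₗ[ℝ] V)
    (hB : ∀ X Y : V, ⟪B X, Y⟫ = ⟪X, B Y⟫)
    (hcompat : ∀ X Y Z W : V, R (B X) Y Z W + R (B Y) Z X W + R (B Z) X Y W = 0) :
    ∀ X Y : V, (∑ a, R (e a) (B X) Y (e a)) = ∑ a, R (e a) X (B Y) (e a) := by
  intro X Y
  change ricci e R (B X) Y = ricci e R X (B Y)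
  calc ricci e R (B X) Y
      = ∑ a, R (B (e a)) Y X (e a) :=
        (sum_apply_map_basis_eq_ricci R e hanti1 hanti2 hcompat Y X).symm
    _ = ∑ a, R (B (e a)) X Y (e a) := sum_apply_map_basis_comm R e hanti1 hanti2 hpair hB Y X
    _ = ricci e R (B Y) X := sum_apply_map_basis_eq_ricci R e hanti1 hanti2 hcompat X Y
    _ = ricci e R X (B Y) := ricci_comm R e hanti1 hanti2 hpair _ _

/-- If `R` is a generalized curvature tensor and `B` a self-adjoint `R`-compatible
endomorphism, then `B` commutes with the Ricci contraction of `R`: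
`Ric(BX, Y) = Ric(X, BY)` where `Ric(X,Y) = ∑ₐ R(eₐ, X, Y, eₐ)` for an orthonormal
basis `(eₐ)`. -/
theorem ricci_commutes_of_compatible
    {V : Type*} [NormedAddCommGroup V] [InnerProductSpace ℝ V] [FiniteDimensional ℝ V]
    (e : OrthonormalBasis (Fin (Module.finrank ℝ V)) ℝ V)
    (R : V →ₗ[ℝ] V →ₗ[ℝ] V →ₗ[ℝ] V →ₗ[ℝ] ℝ)
    (hanti1 : ∀ X Y Z W : V, R X Y Z W = - R Y X Z W)
    (hanti2 : ∀ X Y Z W : V, R X Y Z W = - R X Y W Z)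
    (hpair : ∀ X Y Z W : V, R X Y Z W = R Z W X Y)
    (hbianchi : ∀ X Y Z W : V, R X Y Z W + R Y Z X W + R Z X Y W = 0)
    (B : V →ₗ[ℝ] V)
    (hB : ∀ X Y : V, ⟪B X, Y⟫ = ⟪X, B Y⟫)
    (hcompat : ∀ X Y Z W : V, R (B X) Y Z W + R (B Y) Z X W + R (B Z) X Y W = 0) :
    ∀ X Y : V, (∑ a, R (e a) (B X) Y (e a)) = ∑ a, R (e a) X (B Y) (e a) :=
  ricci_commutes_of_compatible_general e R hanti1 hanti2 hpair B hB hcompat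
end

section
/- Let R be a generalized curvature tensor on a finite-dimensional real inner product space, B a self-adjoint R-compatible endomorphism, and define R̊(X,Y) = Σ_{a,b} b(eₐ,e_b) R(eₐ, X, Y, e_b), where b(U,V)=⟨BU,V⟩. Then R̊ is symmetric and commutes with B: R̊(BX, Y) = R̊(X, BY). -/
/-! Self-adjointness of `B` lets `R̊(X, Y)` be written as `∑ₐ R(Beₐ, X, Y, eₐ)` or as
`∑ₐ R(eₐ, X, Y, Beₐ)`, and the symmetry `R(X, Y, Z, W) = R(W, Z, Y, X)` of a curvature tensor
exchanges the two forms with `X, Y` swapped. Compatibility gives `R̊(X, Y) = Ric(BY, X)`, so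
`R̊(BX, Y) = Ric(BY, BX)` is symmetric in `X, Y` by the symmetry of `Ric`. -/

open RealInnerProductSpace

noncomputable section Contraction

variable {V ι : Type*} [NormedAddCommGroup V] [InnerProductSpace ℝ V] [Fintype ι]
  (e : OrthonormalBasis ι ℝ V) (R : V →ₗ[ℝ] V →ₗ[ℝ] V →ₗ[ℝ] V →ₗ[ℝ] ℝ) (B : V →ₗ[ℝ] V)

theorem OrthonormalBasis.sum_inner_smul_apply {M : Type*} [AddCommMonoid M] [Module ℝ M]
    (g : V →ₗ[ℝ] M) (v : V) : ∑ i, ⟪v, e i⟫ • g (e i) = g v := by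
  conv_rhs => rw [← e.sum_repr' v]
  simp only [map_sum, map_smul, real_inner_comm]

def ricciContraction (U W : V) : ℝ := ∑ a, R (e a) U W (e a)

/-- The contraction `R̊` of `R` against `b(U, V) = ⟪BU, V⟫`. -/
def ringContraction (X Y : V) : ℝ := ∑ a, ∑ b, ⟪B (e a), e b⟫ * R (e a) X Y (e b)

theorem ringContraction_eq_sum_last (X Y : V) :
    ringContraction e R B X Y = ∑ a, R (e a) X Y (B (e a)) :=
  Finset.sum_congr rfl fun a _ => e.sum_inner_smul_apply (R (e a) X Y) (B (e a))

theorem ringContraction_eq_sum_first (hB : B.IsSymmetric) (X Y : V) :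
    ringContraction e R B X Y = ∑ b, R (B (e b)) X Y (e b) := by
  rw [ringContraction, Finset.sum_comm]
  refine Finset.sum_congr rfl fun b _ => ?_
  have hR : ∑ a, ⟪B (e b), e a⟫ • R (e a) = R (B (e b)) := e.sum_inner_smul_apply R (B (e b))
  rw [← hR]
  simp only [LinearMap.sum_apply, LinearMap.smul_apply, smul_eq_mul]
  refine Finset.sum_congr rfl fun a _ => ?_
  rw [hB (e a) (e b), real_inner_comm]

variable {R}

theorem apply_eq_apply_reverse (hanti1 : ∀ X Y Z W : V, R X Y Z W = - R Y X Z W)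
    (hanti2 : ∀ X Y Z W : V, R X Y Z W = - R X Y W Z)
    (hpair : ∀ X Y Z W : V, R X Y Z W = R Z W X Y) (X Y Z W : V) :
    R X Y Z W = R W Z Y X := by
  rw [hpair, hanti1, hanti2, neg_neg]

theorem ricciContraction_comm (hanti1 : ∀ X Y Z W : V, R X Y Z W = - R Y X Z W)
    (hanti2 : ∀ X Y Z W : V, R X Y Z W = - R X Y W Z)
    (hpair : ∀ X Y Z W : V, R X Y Z W = R Z W X Y) (U W : V) :
    ricciContraction e R U W = ricciContraction e R W U :=
  Finset.sum_congr rfl fun _ _ => apply_eq_apply_reverse hanti1 hanti2 hpair _ _ _ _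

theorem ringContraction_comm (hanti1 : ∀ X Y Z W : V, R X Y Z W = - R Y X Z W)
    (hanti2 : ∀ X Y Z W : V, R X Y Z W = - R X Y W Z)
    (hpair : ∀ X Y Z W : V, R X Y Z W = R Z W X Y) (hB : B.IsSymmetric) (X Y : V) :
    ringContraction e R B X Y = ringContraction e R B Y X := by
  rw [ringContraction_eq_sum_last, ringContraction_eq_sum_first e R B hB]
  exact Finset.sum_congr rfl fun _ _ => apply_eq_apply_reverse hanti1 hanti2 hpair _ _ _ _

/-- Compatibility at `(eₐ, X, Y, eₐ)` moves `B` from the contracted slot onto `Y`; its middle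
term `R(BX, Y, eₐ, eₐ)` vanishes. -/
theorem ringContraction_eq_ricciContraction (hanti1 : ∀ X Y Z W : V, R X Y Z W = - R Y X Z W)
    (hanti2 : ∀ X Y Z W : V, R X Y Z W = - R X Y W Z) (hB : B.IsSymmetric)
    (hcompat : ∀ X Y Z W : V, R (B X) Y Z W + R (B Y) Z X W + R (B Z) X Y W = 0) (X Y : V) :
    ringContraction e R B X Y = ricciContraction e R (B Y) X := by
  rw [ringContraction_eq_sum_first e R B hB]
  refine Finset.sum_congr rfl fun a _ => ?_
  have hvanish : R (B X) Y (e a) (e a) = 0 := by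
    linarith [hanti2 (B X) Y (e a) (e a)]
  linarith [hcompat (e a) X Y (e a), hanti1 (B Y) (e a) X (e a)]

end Contraction

theorem ringR_symmetric_and_commutes_general
    {V : Type*} [NormedAddCommGroup V] [InnerProductSpace ℝ V]
    (e : OrthonormalBasis (Fin (Module.finrank ℝ V)) ℝ V)
    (R : V →ₗ[ℝ] V →ₗ[ℝ] V →ₗ[ℝ] V →ₗ[ℝ] ℝ)
    (hanti1 : ∀ X Y Z W : V, R X Y Z W = - R Y X Z W)
    (hanti2 : ∀ X Y Z W : V, R X Y Z W = - R X Y W Z)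
    (hpair : ∀ X Y Z W : V, R X Y Z W = R Z W X Y)
    (B : V →ₗ[ℝ] V)
    (hB : ∀ X Y : V, ⟪B X, Y⟫ = ⟪X, B Y⟫)
    (hcompat : ∀ X Y Z W : V, R (B X) Y Z W + R (B Y) Z X W + R (B Z) X Y W = 0) :
    (∀ X Y : V, (∑ a, ∑ b, ⟪B (e a), e b⟫ * R (e a) X Y (e b)) =
        ∑ a, ∑ b, ⟪B (e a), e b⟫ * R (e a) Y X (e b)) ∧
    (∀ X Y : V, (∑ a, ∑ b, ⟪B (e a), e b⟫ * R (e a) (B X) Y (e b)) =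
        ∑ a, ∑ b, ⟪B (e a), e b⟫ * R (e a) X (B Y) (e b)) := by
  have hsymm := ringContraction_comm e B hanti1 hanti2 hpair hB
  refine ⟨hsymm, fun X Y => ?_⟩
  calc ringContraction e R B (B X) Y
      = ricciContraction e R (B Y) (B X) :=
        ringContraction_eq_ricciContraction e B hanti1 hanti2 hB hcompat _ _
    _ = ricciContraction e R (B X) (B Y) := ricciContraction_comm e hanti1 hanti2 hpair _ _
    _ = ringContraction e R B (B Y) X :=
        (ringContraction_eq_ricciContraction e B hanti1 hanti2 hB hcompat _ _).symm
    _ = ringContraction e R B X (B Y) := hsymm _ _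

/-- If `R` is a generalized curvature tensor, `B` a self-adjoint `R`-compatible
endomorphism with associated bilinear form `b(U,V) = ⟪BU, V⟫`, then the double
contraction `R̊(X,Y) = ∑_{a,b} b(eₐ, e_b) R(eₐ, X, Y, e_b)` is symmetric and commutes
with `B`: `R̊(BX, Y) = R̊(X, BY)`. -/
theorem ringR_symmetric_and_commutes
    {V : Type*} [NormedAddCommGroup V] [InnerProductSpace ℝ V] [FiniteDimensional ℝ V]
    (e : OrthonormalBasis (Fin (Module.finrank ℝ V)) ℝ V)
    (R : V →ₗ[ℝ] V →ₗ[ℝ] V →ₗ[ℝ] V →ₗ[ℝ] ℝ)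
    (hanti1 : ∀ X Y Z W : V, R X Y Z W = - R Y X Z W)
    (hanti2 : ∀ X Y Z W : V, R X Y Z W = - R X Y W Z)
    (hpair : ∀ X Y Z W : V, R X Y Z W = R Z W X Y)
    (hbianchi : ∀ X Y Z W : V, R X Y Z W + R Y Z X W + R Z X Y W = 0)
    (B : V →ₗ[ℝ] V)
    (hB : ∀ X Y : V, ⟪B X, Y⟫ = ⟪X, B Y⟫)
    (hcompat : ∀ X Y Z W : V, R (B X) Y Z W + R (B Y) Z X W + R (B Z) X Y W = 0) :
    (∀ X Y : V, (∑ a, ∑ b, ⟪B (e a), e b⟫ * R (e a) X Y (e b)) =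
        ∑ a, ∑ b, ⟪B (e a), e b⟫ * R (e a) Y X (e b)) ∧
    (∀ X Y : V, (∑ a, ∑ b, ⟪B (e a), e b⟫ * R (e a) (B X) Y (e b)) =
        ∑ a, ∑ b, ⟪B (e a), e b⟫ * R (e a) X (B Y) (e b)) :=
  ringR_symmetric_and_commutes_general e R hanti1 hanti2 hpair B hB hcompat
end

section
/- Let R be a generalized curvature tensor and B a self-adjoint endomorphism that is R-compatible. Then the Veblen-type identity holds: R(Y,W,Z,BX) + R(Z,X,W,BY) + R(W,Y,X,BZ) + R(X,Z,Y,BW) = 0 for all X,Y,Z,W. -/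
open RealInnerProductSpace

/- Move `B` to the first slot of every term with the pair symmetry and the first antisymmetry.
The resulting four terms are the leading terms of four instances of the compatibility condition;
the remaining eight terms of those instances cancel in pairs by antisymmetry in the last two slots. -/

section

variable {V M : Type*} [AddCommGroup M]

def compatibilitySum (R : V → V → V → V → M) (B : V → V) (X Y Z W : V) : M :=
  R (B X) Y Z W + R (B Y) Z X W + R (B Z) X Y W

theorem compatibilitySum_add_add_add {R : V → V → V → V → M}
    (hanti : ∀ X Y Z W, R X Y Z W = - R X Y W Z) (B : V → V) (X Y Z W : V) :
    compatibilitySum R B X Z Y W + compatibilitySum R B Y W Z X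
      + compatibilitySum R B Z X W Y + compatibilitySum R B W Y X Z
      = R (B X) Z Y W + R (B Y) W Z X + R (B Z) X W Y + R (B W) Y X Z := by
  simp only [compatibilitySum]
  rw [hanti (B Y) X Z W, hanti (B Z) Y X W, hanti (B W) Z Y X, hanti (B X) W Z Y]
  abel

theorem apply_eq_neg_apply_of_pair_symm {R : V → V → V → V → M}
    (hanti : ∀ X Y Z W, R X Y Z W = - R Y X Z W) (hpair : ∀ X Y Z W, R X Y Z W = R Z W X Y)
    (X Y Z W : V) : R X Y Z W = - R W Z X Y := by
  rw [hpair, hanti]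

end

theorem veblen_identity_of_compatible_general
    {V : Type*} [NormedAddCommGroup V] [InnerProductSpace ℝ V]
    (R : V →ₗ[ℝ] V →ₗ[ℝ] V →ₗ[ℝ] V →ₗ[ℝ] ℝ)
    (hanti1 : ∀ X Y Z W : V, R X Y Z W = - R Y X Z W)
    (hanti2 : ∀ X Y Z W : V, R X Y Z W = - R X Y W Z)
    (hpair : ∀ X Y Z W : V, R X Y Z W = R Z W X Y)
    (B : V →ₗ[ℝ] V)
    (hcompat : ∀ X Y Z W : V, R (B X) Y Z W + R (B Y) Z X W + R (B Z) X Y W = 0) :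
    ∀ X Y Z W : V,
      R Y W Z (B X) + R Z X W (B Y) + R W Y X (B Z) + R X Z Y (B W) = 0 := by
  intro X Y Z W
  have hzero : ∀ X Y Z W, compatibilitySum (fun X Y Z W => R X Y Z W) B X Y Z W = 0 := hcompat
  have hsum := compatibilitySum_add_add_add (R := fun X Y Z W => R X Y Z W) hanti2 B X Y Z W
  rw [hzero, hzero, hzero, hzero] at hsum
  simp only [apply_eq_neg_apply_of_pair_symm (R := fun X Y Z W => R X Y Z W) hanti1 hpair _ _ _ (B _)]
  linear_combination hsum

/-- Veblen-type identity: if `R` is a generalized curvature tensor and `B` a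
self-adjoint `R`-compatible endomorphism then
`R(Y,W,Z,BX) + R(Z,X,W,BY) + R(W,Y,X,BZ) + R(X,Z,Y,BW) = 0`. -/
theorem veblen_identity_of_compatible
    {V : Type*} [NormedAddCommGroup V] [InnerProductSpace ℝ V] [FiniteDimensional ℝ V]
    (R : V →ₗ[ℝ] V →ₗ[ℝ] V →ₗ[ℝ] V →ₗ[ℝ] ℝ)
    (hanti1 : ∀ X Y Z W : V, R X Y Z W = - R Y X Z W)
    (hanti2 : ∀ X Y Z W : V, R X Y Z W = - R X Y W Z)
    (hpair : ∀ X Y Z W : V, R X Y Z W = R Z W X Y)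
    (hbianchi : ∀ X Y Z W : V, R X Y Z W + R Y Z X W + R Z X Y W = 0)
    (B : V →ₗ[ℝ] V)
    (hB : ∀ X Y : V, ⟪B X, Y⟫ = ⟪X, B Y⟫)
    (hcompat : ∀ X Y Z W : V, R (B X) Y Z W + R (B Y) Z X W + R (B Z) X Y W = 0) :
    ∀ X Y Z W : V,
      R Y W Z (B X) + R Z X W (B Y) + R W Y X (B Z) + R X Z Y (B W) = 0 :=
  veblen_identity_of_compatible_general R hanti1 hanti2 hpair B hcompat
end

section
/- Let b be a smooth symmetric (0,2)-tensor field on a Riemannian manifold whose Codazzi deviation has the pure-trace form 𝒞(X,Y,Z) = λ(X) g(Y,Z) − λ(Y) g(X,Z) for some 1-form λ, on a manifold of dimension n ≥ 3. Then b is Riemann compatible if and only if λ is closed. -/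
/-!
Summing the Ricci identity for `∇²b` cyclically over `X, Y, Z`, the terms `b(R(X,Y)Z, W)` cancel by
the first Bianchi identity, while the left-hand sides regroup, via the pure-trace form of `∇𝒞`,
into the antisymmetric part `dλ` of `∇λ` paired with `g`:
`∑_cyc b(X, R(Y,Z)W) = ∑_cyc dλ(Y,Z) g(X,W)`.
So Riemann compatibility is equivalent to the vanishing of the right-hand side for all `X, Y, Z, W`.
This clearly holds when `dλ = 0`; conversely, in dimension at least three one may take
`W = Z ≠ 0` orthogonal to `X` and `Y`, which leaves `dλ(X,Y) |Z|² = 0`.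
-/

open RealInnerProductSpace

section

variable {V : Type*} [NormedAddCommGroup V] [InnerProductSpace ℝ V]

lemma exists_ne_zero_inner_eq_zero_of_three_le_finrank (hdim : 3 ≤ Module.finrank ℝ V)
    (X Y : V) : ∃ Z : V, Z ≠ 0 ∧ ⟪X, Z⟫ = 0 ∧ ⟪Y, Z⟫ = 0 := by
  have : FiniteDimensional ℝ V := Module.finite_of_finrank_pos (by omega)
  set K := Submodule.span ℝ ({X, Y} : Set V)
  have hK : K ≠ ⊤ := by
    intro htop
    have hle : Module.finrank ℝ K ≤ 2 := by
      classical
      refine (finrank_span_le_card ({X, Y} : Set V)).trans ?_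
      simpa using Finset.card_insert_le X {Y}
    rw [htop, finrank_top] at hle
    omega
  obtain ⟨Z, hZ, hZ0⟩ := Submodule.exists_mem_ne_zero_of_ne_bot
    (mt Submodule.orthogonal_eq_bot_iff.mp hK)
  exact ⟨Z, hZ0, Submodule.inner_right_of_mem_orthogonal (Submodule.subset_span (by simp)) hZ,
    Submodule.inner_right_of_mem_orthogonal (Submodule.subset_span (by simp)) hZ⟩

lemma eq_zero_of_cyclic_inner_eq_zero (hdim : 3 ≤ Module.finrank ℝ V) {A : V → V → ℝ}
    (hA : ∀ X Y Z W : V, A Y Z * ⟪X, W⟫ + A Z X * ⟪Y, W⟫ + A X Y * ⟪Z, W⟫ = 0) (X Y : V) :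
    A X Y = 0 := by
  obtain ⟨Z, hZ0, hXZ, hYZ⟩ := exists_ne_zero_inner_eq_zero_of_three_le_finrank hdim X Y
  have h := hA X Y Z Z
  rw [hXZ, hYZ, mul_zero, mul_zero, zero_add, zero_add] at h
  exact (mul_eq_zero.mp h).resolve_right (inner_self_ne_zero.mpr hZ0)

lemma cyclic_sum_apply_curvature_eq (b : V →ₗ[ℝ] V →ₗ[ℝ] ℝ) (R : V → V → V → V)
    (hbianchi : ∀ X Y Z : V, R X Y Z + R Y Z X + R Z X Y = 0)
    (Dlam : V → V → ℝ) (DDb : V → V → V → V → ℝ)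
    (hricci : ∀ X Y Z W : V, DDb X Y Z W - DDb Y X Z W = b (R X Y Z) W + b Z (R X Y W))
    (hleibniz : ∀ W X Y Z : V,
      DDb W X Y Z - DDb W Y X Z = Dlam W X * ⟪Y, Z⟫ - Dlam W Y * ⟪X, Z⟫)
    (X Y Z W : V) :
    b X (R Y Z W) + b Y (R Z X W) + b Z (R X Y W) =
      (Dlam Y Z - Dlam Z Y) * ⟪X, W⟫ + (Dlam Z X - Dlam X Z) * ⟪Y, W⟫ +
        (Dlam X Y - Dlam Y X) * ⟪Z, W⟫ := by
  have hcyc : b (R X Y Z) W + b (R Y Z X) W + b (R Z X Y) W = 0 := by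
    rw [← LinearMap.add_apply, ← LinearMap.add_apply, ← map_add, ← map_add, hbianchi]
    simp
  linarith [hricci X Y Z W, hricci Y Z X W, hricci Z X Y W,
    hleibniz X Y Z W, hleibniz Y Z X W, hleibniz Z X Y W]

end

theorem riemann_compatible_iff_lambda_closed_general
    {V : Type*} [NormedAddCommGroup V] [InnerProductSpace ℝ V]
    (hdim : 3 ≤ Module.finrank ℝ V)
    (b : V →ₗ[ℝ] V →ₗ[ℝ] ℝ)
    (hbsymm : ∀ X Y : V, b X Y = b Y X)
    (R : V → V → V → V)
    (hbianchi : ∀ X Y Z : V, R X Y Z + R Y Z X + R Z X Y = 0)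
    (Dlam : V →ₗ[ℝ] V →ₗ[ℝ] ℝ)
    (DDb : V → V → V → V → ℝ)
    -- Ricci identity for the second covariant derivative of `b`:
    (hricci : ∀ X Y Z W : V,
      DDb X Y Z W - DDb Y X Z W = b (R X Y Z) W + b Z (R X Y W))
    -- Leibniz rule: `(∇_W 𝒞)(X,Y,Z)` computed from the pure-trace form (`∇g = 0`):
    (hleibniz : ∀ W X Y Z : V,
      DDb W X Y Z - DDb W Y X Z = Dlam W X * ⟪Y, Z⟫ - Dlam W Y * ⟪X, Z⟫) :
    (∀ X Y Z W : V, b (R Y Z W) X + b (R Z X W) Y + b (R X Y W) Z = 0) ↔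
      (∀ X Y : V, Dlam X Y = Dlam Y X) := by
  have key (X Y Z W : V) :
      b (R Y Z W) X + b (R Z X W) Y + b (R X Y W) Z =
        (Dlam Y Z - Dlam Z Y) * ⟪X, W⟫ + (Dlam Z X - Dlam X Z) * ⟪Y, W⟫ +
          (Dlam X Y - Dlam Y X) * ⟪Z, W⟫ := by
    rw [hbsymm (R Y Z W), hbsymm (R Z X W), hbsymm (R X Y W)]
    exact cyclic_sum_apply_curvature_eq b R hbianchi _ DDb hricci hleibniz X Y Z W
  constructor
  · intro hcompat X Y
    refine sub_eq_zero.mp (eq_zero_of_cyclic_inner_eq_zero hdim (A := fun X Y ↦ Dlam X Y - Dlam Y X)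
      (fun X Y Z W ↦ ?_) X Y)
    rw [← key, hcompat]
  · intro hclosed X Y Z W
    simp [key, hclosed]

/-- If the Codazzi deviation of a symmetric `(0,2)`-tensor `b` has the pure-trace form
`𝒞(X,Y,Z) = λ(X) g(Y,Z) − λ(Y) g(X,Z)` on a manifold of dimension `n ≥ 3`, then `b` is
Riemann compatible if and only if `λ` is closed. -/
theorem riemann_compatible_iff_lambda_closed
    {V : Type*} [NormedAddCommGroup V] [InnerProductSpace ℝ V] [FiniteDimensional ℝ V]
    (hdim : 3 ≤ Module.finrank ℝ V)
    (b : V →ₗ[ℝ] V →ₗ[ℝ] ℝ)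
    (hbsymm : ∀ X Y : V, b X Y = b Y X)
    (R : V → V → V → V)
    (hbianchi : ∀ X Y Z : V, R X Y Z + R Y Z X + R Z X Y = 0)
    (lam : V → ℝ) (Dlam : V →ₗ[ℝ] V →ₗ[ℝ] ℝ)
    (Db : V → V → V → ℝ)
    (DDb : V → V → V → V → ℝ)
    -- Ricci identity for the second covariant derivative of `b`:
    (hricci : ∀ X Y Z W : V,
      DDb X Y Z W - DDb Y X Z W = b (R X Y Z) W + b Z (R X Y W))
    -- the pure-trace form of the Codazzi deviation:
    (hpure : ∀ X Y Z : V,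
      Db X Y Z - Db Y X Z = lam X * ⟪Y, Z⟫ - lam Y * ⟪X, Z⟫)
    -- Leibniz rule: `(∇_W 𝒞)(X,Y,Z)` computed from the pure-trace form (`∇g = 0`):
    (hleibniz : ∀ W X Y Z : V,
      DDb W X Y Z - DDb W Y X Z = Dlam W X * ⟪Y, Z⟫ - Dlam W Y * ⟪X, Z⟫) :
    (∀ X Y Z W : V, b (R Y Z W) X + b (R Z X W) Y + b (R X Y W) Z = 0) ↔
      (∀ X Y : V, Dlam X Y = Dlam Y X) :=
  riemann_compatible_iff_lambda_closed_general hdim b hbsymm R hbianchi Dlam DDb hricci hleibniz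
end

section
/- On a 2-dimensional Riemannian manifold, every symmetric (0,2)-tensor field b is Riemann compatible: b(R(Y,Z)W, X) + b(R(Z,X)W, Y) + b(R(X,Y)W, Z) = 0 for all vector fields X, Y, Z, W. -/
open RealInnerProductSpace

/-!
In dimension two the curvature tensor is `R(X,Y)W = κ (⟪Y,W⟫ X − ⟪X,W⟫ Y)`. For fixed `W` this
is `κ` times the alternating map `(X, Y) ↦ f Y • X − f X • Y` with `f = ⟪·, W⟫`, and the cyclic
sum of a symmetric bilinear form against such a map cancels term by term.
-/

theorem LinearMap.cyclic_sum_apply_sub_smul_eq_zero {R M : Type*} [CommRing R] [AddCommGroup M]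
    [Module R M] (b : M →ₗ[R] M →ₗ[R] R) (hb : ∀ x y, b x y = b y x) (f : M → R) (x y z : M) :
    b (f z • y - f y • z) x + b (f x • z - f z • x) y + b (f y • x - f x • y) z = 0 := by
  simp only [map_sub, map_smul, LinearMap.sub_apply, LinearMap.smul_apply, smul_eq_mul]
  rw [hb y x, hb z x, hb z y]
  ring

theorem eq_smul_of_inner_eq_const_curvature {V : Type*} [NormedAddCommGroup V]
    [InnerProductSpace ℝ V] {R : V → V → V → V} {kappa : ℝ}
    (hR : ∀ X Y Z W : V, ⟪R X Y Z, W⟫ = kappa * (⟪X, W⟫ * ⟪Y, Z⟫ - ⟪X, Z⟫ * ⟪Y, W⟫))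
    (X Y Z : V) : R X Y Z = kappa • (⟪Y, Z⟫ • X - ⟪X, Z⟫ • Y) := by
  refine ext_inner_right ℝ fun T => ?_
  rw [hR, real_inner_smul_left, inner_sub_left, real_inner_smul_left, real_inner_smul_left]
  ring

theorem riemann_compatible_dim_two_general
    {V : Type*} [NormedAddCommGroup V] [InnerProductSpace ℝ V]
    (R : V → V → V → V) (kappa : ℝ)
    (hR : ∀ X Y Z W : V,
      ⟪R X Y Z, W⟫ = kappa * (⟪X, W⟫ * ⟪Y, Z⟫ - ⟪X, Z⟫ * ⟪Y, W⟫))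
    (b : V →ₗ[ℝ] V →ₗ[ℝ] ℝ)
    (hbsymm : ∀ X Y : V, b X Y = b Y X) :
    ∀ X Y Z W : V, b (R Y Z W) X + b (R Z X W) Y + b (R X Y W) Z = 0 := by
  intro X Y Z W
  have hcyc := b.cyclic_sum_apply_sub_smul_eq_zero hbsymm (fun T => ⟪T, W⟫) X Y Z
  simp only [eq_smul_of_inner_eq_const_curvature hR, map_smul, LinearMap.smul_apply,
    smul_eq_mul, ← mul_add, hcyc, mul_zero]

/-- On a 2-dimensional Riemannian manifold every symmetric `(0,2)`-tensor `b` is Riemann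
compatible: `b(R(Y,Z)W, X) + b(R(Z,X)W, Y) + b(R(X,Y)W, Z) = 0`. -/
theorem riemann_compatible_dim_two
    {V : Type*} [NormedAddCommGroup V] [InnerProductSpace ℝ V] [FiniteDimensional ℝ V]
    (hdim : Module.finrank ℝ V = 2)
    (R : V → V → V → V) (kappa : ℝ)
    (hR : ∀ X Y Z W : V,
      ⟪R X Y Z, W⟫ = kappa * (⟪X, W⟫ * ⟪Y, Z⟫ - ⟪X, Z⟫ * ⟪Y, W⟫))
    (b : V →ₗ[ℝ] V →ₗ[ℝ] ℝ)
    (hbsymm : ∀ X Y : V, b X Y = b Y X) :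
    ∀ X Y Z W : V, b (R Y Z W) X + b (R Z X W) Y + b (R X Y W) Z = 0 :=
  riemann_compatible_dim_two_general R kappa hR b hbsymm
end

section
/- On a 3-dimensional Riemannian manifold, for any symmetric (0,2)-tensor field b the Riemann-compatibility defect equals a metric combination of Ricci commutators: b(R(Y,Z)W,X) + b(R(Z,X)W,Y) + b(R(X,Y)W,Z) = g(Z,W)(b(Ric Y, X) − b(Ric X, Y)) + g(X,W)(b(Ric Z, Y) − b(Ric Y, Z)) + g(Y,W)(b(Ric X, Z) − b(Ric Z, X)), where Ric is the Ricci operator. In particular, any symmetric b commuting with the Ricci operator is Riemann compatible, and the Ricci tensor itself is always Riemann compatible in dimension 3. -/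
open RealInnerProductSpace

/-!
In dimension 3 the curvature operator is the vector-valued expression `curvatureOfRicci` built
from the Ricci operator. Substituting it into the cyclic sum, the scalar-curvature terms cancel
and, by symmetry of `b` and of `Ric`, so do all terms except the commutators `b (Ric Y) X -
b (Ric X) Y`. These vanish when `b` commutes with `Ric`, in particular for `b = ⟪Ric ·, ·⟫`.
-/

section

variable {V : Type*} [NormedAddCommGroup V] [InnerProductSpace ℝ V]

noncomputable def curvatureOfRicci (Ric : V →ₗ[ℝ] V) (S : ℝ) (X Y Z : V) : V :=
  ⟪Ric Y, Z⟫ • X + ⟪Y, Z⟫ • Ric X - ⟪Ric X, Z⟫ • Y - ⟪X, Z⟫ • Ric Y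
    - (S / 2) • (⟪Y, Z⟫ • X - ⟪X, Z⟫ • Y)

theorem inner_curvatureOfRicci (Ric : V →ₗ[ℝ] V) (S : ℝ) (X Y Z W : V) :
    ⟪curvatureOfRicci Ric S X Y Z, W⟫ =
      ⟪X, W⟫ * ⟪Ric Y, Z⟫ + ⟪Y, Z⟫ * ⟪Ric X, W⟫
        - ⟪Y, W⟫ * ⟪Ric X, Z⟫ - ⟪X, Z⟫ * ⟪Ric Y, W⟫
        - S / 2 * (⟪X, W⟫ * ⟪Y, Z⟫ - ⟪X, Z⟫ * ⟪Y, W⟫) := by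
  simp only [curvatureOfRicci, inner_sub_left, inner_add_left, real_inner_smul_left]
  ring

theorem eq_curvatureOfRicci {Ric : V →ₗ[ℝ] V} {S : ℝ}
    {R : V → V → V → V}
    (hR : ∀ X Y Z W : V,
      ⟪R X Y Z, W⟫ =
        ⟪X, W⟫ * ⟪Ric Y, Z⟫ + ⟪Y, Z⟫ * ⟪Ric X, W⟫
          - ⟪Y, W⟫ * ⟪Ric X, Z⟫ - ⟪X, Z⟫ * ⟪Ric Y, W⟫
          - S / 2 * (⟪X, W⟫ * ⟪Y, Z⟫ - ⟪X, Z⟫ * ⟪Y, W⟫)) :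
    R = curvatureOfRicci Ric S :=
  funext₃ fun X Y Z => ext_inner_right ℝ fun W =>
    (hR X Y Z W).trans (inner_curvatureOfRicci Ric S X Y Z W).symm

theorem cyclic_curvatureOfRicci {Ric : V →ₗ[ℝ] V} (hRic : Ric.IsSymmetric) (S : ℝ)
    (b : V →ₗ[ℝ] V →ₗ[ℝ] ℝ) (hb : ∀ X Y : V, b X Y = b Y X) (X Y Z W : V) :
    b (curvatureOfRicci Ric S Y Z W) X + b (curvatureOfRicci Ric S Z X W) Y
        + b (curvatureOfRicci Ric S X Y W) Z =
      ⟪Z, W⟫ * (b (Ric Y) X - b (Ric X) Y)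
        + ⟪X, W⟫ * (b (Ric Z) Y - b (Ric Y) Z)
        + ⟪Y, W⟫ * (b (Ric X) Z - b (Ric Z) X) := by
  simp only [curvatureOfRicci, map_sub, map_add, map_smul, LinearMap.sub_apply,
    LinearMap.add_apply, LinearMap.smul_apply, smul_eq_mul]
  rw [hb Y X, hb Z X, hb Z Y, hRic Z W, hRic X W, hRic Y W]
  ring

theorem cyclic_curvatureOfRicci_eq_zero {Ric : V →ₗ[ℝ] V} (hRic : Ric.IsSymmetric) (S : ℝ)
    (b : V →ₗ[ℝ] V →ₗ[ℝ] ℝ) (hb : ∀ X Y : V, b X Y = b Y X)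
    (hcomm : ∀ X Y : V, b (Ric X) Y = b X (Ric Y)) (X Y Z W : V) :
    b (curvatureOfRicci Ric S Y Z W) X + b (curvatureOfRicci Ric S Z X W) Y
        + b (curvatureOfRicci Ric S X Y W) Z = 0 := by
  have hswap : ∀ X Y : V, b (Ric X) Y = b (Ric Y) X := fun X Y => by
    rw [hcomm, hb]
  rw [cyclic_curvatureOfRicci hRic S b hb, hswap Y X, hswap Z Y, hswap X Z]
  ring

theorem LinearMap.IsSymmetric.innerₗ_comp_symm {T : V →ₗ[ℝ] V} (hT : T.IsSymmetric)
    (X Y : V) : (innerₗ V ∘ₗ T) X Y = (innerₗ V ∘ₗ T) Y X := by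
  simp [hT X Y, real_inner_comm]

theorem LinearMap.IsSymmetric.innerₗ_comp_commute {T : V →ₗ[ℝ] V} (hT : T.IsSymmetric)
    (X Y : V) : (innerₗ V ∘ₗ T) (T X) Y = (innerₗ V ∘ₗ T) X (T Y) := by
  simp [hT (T X) Y]

end

theorem riemann_compatibility_dim_three_general
    {V : Type*} [NormedAddCommGroup V] [InnerProductSpace ℝ V]
    (Ric : V →ₗ[ℝ] V)
    (hRic : ∀ X Y : V, ⟪Ric X, Y⟫ = ⟪X, Ric Y⟫)
    (S : ℝ)
    (R : V → V → V → V)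
    (hR : ∀ X Y Z W : V,
      ⟪R X Y Z, W⟫ =
        ⟪X, W⟫ * ⟪Ric Y, Z⟫ + ⟪Y, Z⟫ * ⟪Ric X, W⟫
          - ⟪Y, W⟫ * ⟪Ric X, Z⟫ - ⟪X, Z⟫ * ⟪Ric Y, W⟫
          - S / 2 * (⟪X, W⟫ * ⟪Y, Z⟫ - ⟪X, Z⟫ * ⟪Y, W⟫)) :
    (∀ (b : V →ₗ[ℝ] V →ₗ[ℝ] ℝ), (∀ X Y : V, b X Y = b Y X) →
      ∀ X Y Z W : V,
        b (R Y Z W) X + b (R Z X W) Y + b (R X Y W) Z =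
          ⟪Z, W⟫ * (b (Ric Y) X - b (Ric X) Y)
            + ⟪X, W⟫ * (b (Ric Z) Y - b (Ric Y) Z)
            + ⟪Y, W⟫ * (b (Ric X) Z - b (Ric Z) X)) ∧
    (∀ (b : V →ₗ[ℝ] V →ₗ[ℝ] ℝ), (∀ X Y : V, b X Y = b Y X) →
      (∀ X Y : V, b (Ric X) Y = b X (Ric Y)) →
      ∀ X Y Z W : V, b (R Y Z W) X + b (R Z X W) Y + b (R X Y W) Z = 0) ∧
    (∀ X Y Z W : V,
      ⟪Ric (R Y Z W), X⟫ + ⟪Ric (R Z X W), Y⟫ + ⟪Ric (R X Y W), Z⟫ = 0) := by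
  obtain rfl := eq_curvatureOfRicci hR
  refine ⟨cyclic_curvatureOfRicci hRic S, cyclic_curvatureOfRicci_eq_zero hRic S, ?_⟩
  simpa using cyclic_curvatureOfRicci_eq_zero hRic S (innerₗ V ∘ₗ Ric)
    (LinearMap.IsSymmetric.innerₗ_comp_symm hRic)
    (LinearMap.IsSymmetric.innerₗ_comp_commute hRic)

/-- In dimension 3, for any symmetric `(0,2)`-tensor `b` the Riemann-compatibility
defect equals a metric combination of Ricci commutators; in particular any symmetric
`b` commuting with the Ricci operator is Riemann compatible, and the Ricci tensor
itself is always Riemann compatible. -/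
theorem riemann_compatibility_dim_three
    {V : Type*} [NormedAddCommGroup V] [InnerProductSpace ℝ V] [FiniteDimensional ℝ V]
    (hdim : Module.finrank ℝ V = 3)
    (Ric : V →ₗ[ℝ] V)
    (hRic : ∀ X Y : V, ⟪Ric X, Y⟫ = ⟪X, Ric Y⟫)
    (S : ℝ)
    (R : V → V → V → V)
    (hR : ∀ X Y Z W : V,
      ⟪R X Y Z, W⟫ =
        ⟪X, W⟫ * ⟪Ric Y, Z⟫ + ⟪Y, Z⟫ * ⟪Ric X, W⟫
          - ⟪Y, W⟫ * ⟪Ric X, Z⟫ - ⟪X, Z⟫ * ⟪Ric Y, W⟫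
          - S / 2 * (⟪X, W⟫ * ⟪Y, Z⟫ - ⟪X, Z⟫ * ⟪Y, W⟫)) :
    (∀ (b : V →ₗ[ℝ] V →ₗ[ℝ] ℝ), (∀ X Y : V, b X Y = b Y X) →
      ∀ X Y Z W : V,
        b (R Y Z W) X + b (R Z X W) Y + b (R X Y W) Z =
          ⟪Z, W⟫ * (b (Ric Y) X - b (Ric X) Y)
            + ⟪X, W⟫ * (b (Ric Z) Y - b (Ric Y) Z)
            + ⟪Y, W⟫ * (b (Ric X) Z - b (Ric Z) X)) ∧
    (∀ (b : V →ₗ[ℝ] V →ₗ[ℝ] ℝ), (∀ X Y : V, b X Y = b Y X) →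
      (∀ X Y : V, b (Ric X) Y = b X (Ric Y)) →
      ∀ X Y Z W : V, b (R Y Z W) X + b (R Z X W) Y + b (R X Y W) Z = 0) ∧
    (∀ X Y Z W : V,
      ⟪Ric (R Y Z W), X⟫ + ⟪Ric (R Z X W), Y⟫ + ⟪Ric (R X Y W), Z⟫ = 0) :=
  riemann_compatibility_dim_three_general Ric hRic S R hR
end

section
/- Let (M,g) be a Riemannian manifold of dimension n ≠ 2 whose Riemann tensor has quasi-constant curvature form R(X,Y,Z,W) = p(g(X,W)g(Y,Z) − g(Y,W)g(X,Z)) + q(g(X,W)t(Y)t(Z) − g(Y,W)t(X)t(Z) + g(Y,Z)t(W)t(X) − g(X,Z)t(W)t(Y)) for scalar functions p, q and a unit 1-form t. If a symmetric (0,2)-tensor b commutes with the Ricci operator, then b is Riemann compatible. -/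
open RealInnerProductSpace

/-!
Raising the last index, the quasi-constant curvature tensor is the explicit vector field
`R(X,Y)Z = (p⟨Y,Z⟩ + q t(Y)t(Z)) X - (p⟨X,Z⟩ + q t(X)t(Z)) Y + q (⟨Y,Z⟩t(X) - ⟨X,Z⟩t(Y)) T`,
whose trace is the Ricci operator `Ric X = ((1-n)p - q) X + (2-n) q t(X) T`.
A tensor `b` commuting with `Ric` therefore satisfies `(2-n) q (b(T,Y) - t(Y) b(T,T)) = 0`,
so for `n ≠ 2` either `q = 0` or `T` is an eigenvector of `b`. Either way, expanding the
cyclic sum of `b(R(·,·)W, ·)` with the explicit form of `R`, the `p`-terms cancel by the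
symmetry of `b` and the `q`-terms cancel because `q t(X) b(T,Y)` is symmetric in `X, Y`.
-/

section QuasiConstantCurvature

variable {V : Type*} [NormedAddCommGroup V] [InnerProductSpace ℝ V]

def quasiConstCurvature (p q : ℝ) (T X Y Z : V) : V :=
  (p * ⟪Y, Z⟫ + q * (⟪T, Y⟫ * ⟪T, Z⟫)) • X
    + (-(p * ⟪X, Z⟫) - q * (⟪T, X⟫ * ⟪T, Z⟫)) • Y
    + (q * (⟪Y, Z⟫ * ⟪T, X⟫ - ⟪X, Z⟫ * ⟪T, Y⟫)) • T

theorem inner_quasiConstCurvature (p q : ℝ) (T X Y Z W : V) :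
    ⟪quasiConstCurvature p q T X Y Z, W⟫ =
      p * (⟪X, W⟫ * ⟪Y, Z⟫ - ⟪Y, W⟫ * ⟪X, Z⟫)
        + q * (⟪X, W⟫ * ⟪T, Y⟫ * ⟪T, Z⟫ - ⟪Y, W⟫ * ⟪T, X⟫ * ⟪T, Z⟫
            + ⟪Y, Z⟫ * ⟪T, W⟫ * ⟪T, X⟫ - ⟪X, Z⟫ * ⟪T, W⟫ * ⟪T, Y⟫) := by
  simp only [quasiConstCurvature, inner_add_left, real_inner_smul_left]
  ring

theorem eq_quasiConstCurvature_of_inner {p q : ℝ} {T : V} {R : V → V → V → V}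
    (hR : ∀ X Y Z W : V,
      ⟪R X Y Z, W⟫ =
        p * (⟪X, W⟫ * ⟪Y, Z⟫ - ⟪Y, W⟫ * ⟪X, Z⟫)
          + q * (⟪X, W⟫ * ⟪T, Y⟫ * ⟪T, Z⟫ - ⟪Y, W⟫ * ⟪T, X⟫ * ⟪T, Z⟫
              + ⟪Y, Z⟫ * ⟪T, W⟫ * ⟪T, X⟫ - ⟪X, Z⟫ * ⟪T, W⟫ * ⟪T, Y⟫)) :
    R = quasiConstCurvature p q T := by
  ext X Y Z
  exact ext_inner_right ℝ fun W => by rw [hR, inner_quasiConstCurvature]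

theorem sum_inner_quasiConstCurvature {ι : Type*} [Fintype ι] (e : OrthonormalBasis ι ℝ V)
    (p q : ℝ) {T : V} (hT : ⟪T, T⟫ = 1) (X Y : V) :
    ∑ a, ⟪quasiConstCurvature p q T X (e a) Y, e a⟫ =
      ((1 - Fintype.card ι) * p - q) * ⟪X, Y⟫
        + (2 - Fintype.card ι) * q * (⟪T, X⟫ * ⟪T, Y⟫) := by
  have hterm : ∀ a, ⟪quasiConstCurvature p q T X (e a) Y, e a⟫ =
      p * (⟪X, e a⟫ * ⟪e a, Y⟫) - p * ⟪X, Y⟫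
        + q * ⟪T, Y⟫ * (⟪X, e a⟫ * ⟪e a, T⟫) - q * (⟪T, X⟫ * ⟪T, Y⟫)
        + q * ⟪T, X⟫ * (⟪T, e a⟫ * ⟪e a, Y⟫) - q * ⟪X, Y⟫ * (⟪T, e a⟫ * ⟪e a, T⟫) := by
    intro a
    have hea : ⟪e a, e a⟫ = 1 := real_inner_self_eq_norm_sq (e a) ▸ by simp
    rw [inner_quasiConstCurvature, hea, real_inner_comm T (e a)]
    ring
  simp only [hterm, Finset.sum_add_distrib, Finset.sum_sub_distrib, ← Finset.mul_sum,
    OrthonormalBasis.sum_inner_mul_inner, Finset.sum_const, Finset.card_univ, nsmul_eq_mul,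
    hT, real_inner_comm X T]
  ring

theorem ricci_eq_of_quasiConstCurvature {ι : Type*} [Fintype ι] (e : OrthonormalBasis ι ℝ V)
    {p q : ℝ} {T : V} (hT : ⟪T, T⟫ = 1) {Ric : V → V}
    (hRic : ∀ X Y : V, ⟪Ric X, Y⟫ = ∑ a, ⟪quasiConstCurvature p q T X (e a) Y, e a⟫) (X : V) :
    Ric X = ((1 - Fintype.card ι) * p - q) • X + ((2 - Fintype.card ι) * q * ⟪T, X⟫) • T :=
  ext_inner_right ℝ fun Y => by
    rw [hRic, sum_inner_quasiConstCurvature e p q hT]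
    simp only [inner_add_left, real_inner_smul_left]
    ring

theorem mul_apply_eq_of_commute {α β : ℝ} {T : V} (hT : ⟪T, T⟫ = 1) {Ric : V → V}
    (hRic : ∀ X, Ric X = α • X + (β * ⟪T, X⟫) • T) {b : V →ₗ[ℝ] V →ₗ[ℝ] ℝ}
    (hcomm : ∀ X Y : V, b (Ric X) Y = b X (Ric Y)) (Y : V) :
    β * b T Y = β * ⟪T, Y⟫ * b T T := by
  have h := hcomm T Y
  simp only [hRic, map_add, map_smul, LinearMap.add_apply, LinearMap.smul_apply, smul_eq_mul,
    hT] at h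
  linear_combination h

theorem cyclic_sum_quasiConstCurvature {p q : ℝ} {T : V} {b : V →ₗ[ℝ] V →ₗ[ℝ] ℝ}
    (hbsymm : ∀ X Y : V, b X Y = b Y X) (hbT : ∀ Y, q * b T Y = q * ⟪T, Y⟫ * b T T)
    (X Y Z W : V) :
    b (quasiConstCurvature p q T Y Z W) X + b (quasiConstCurvature p q T Z X W) Y
      + b (quasiConstCurvature p q T X Y W) Z = 0 := by
  have hswap : ∀ X Y : V, q * ⟪T, X⟫ * b T Y = q * ⟪T, Y⟫ * b T X := fun X Y => by
    linear_combination ⟪T, X⟫ * hbT Y - ⟪T, Y⟫ * hbT X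
  simp only [quasiConstCurvature, map_add, map_smul, LinearMap.add_apply, LinearMap.smul_apply,
    smul_eq_mul]
  linear_combination
    (p * ⟪Z, W⟫ + q * (⟪T, Z⟫ * ⟪T, W⟫)) * hbsymm Y X
      + (p * ⟪X, W⟫ + q * (⟪T, X⟫ * ⟪T, W⟫)) * hbsymm Z Y
      + (p * ⟪Y, W⟫ + q * (⟪T, Y⟫ * ⟪T, W⟫)) * hbsymm X Z
      + ⟪Z, W⟫ * hswap Y X + ⟪X, W⟫ * hswap Z Y + ⟪Y, W⟫ * hswap X Z

end QuasiConstantCurvature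

/-- In a quasi-constant curvature space of dimension `n ≠ 2`, any symmetric
`(0,2)`-tensor `b` commuting with the Ricci operator is Riemann compatible. -/
theorem riemann_compatible_quasi_constant_curvature
    {V : Type*} [NormedAddCommGroup V] [InnerProductSpace ℝ V] [FiniteDimensional ℝ V]
    (hdim : Module.finrank ℝ V ≠ 2)
    (e : OrthonormalBasis (Fin (Module.finrank ℝ V)) ℝ V)
    (p q : ℝ) (T : V) (hT : ‖T‖ = 1)
    (R : V → V → V → V)
    (hR : ∀ X Y Z W : V,
      ⟪R X Y Z, W⟫ =
        p * (⟪X, W⟫ * ⟪Y, Z⟫ - ⟪Y, W⟫ * ⟪X, Z⟫)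
          + q * (⟪X, W⟫ * ⟪T, Y⟫ * ⟪T, Z⟫ - ⟪Y, W⟫ * ⟪T, X⟫ * ⟪T, Z⟫
              + ⟪Y, Z⟫ * ⟪T, W⟫ * ⟪T, X⟫ - ⟪X, Z⟫ * ⟪T, W⟫ * ⟪T, Y⟫))
    (Ric : V →ₗ[ℝ] V)
    (hRicdef : ∀ X Y : V, ⟪Ric X, Y⟫ = ∑ a, ⟪R X (e a) Y, e a⟫)
    (b : V →ₗ[ℝ] V →ₗ[ℝ] ℝ)
    (hbsymm : ∀ X Y : V, b X Y = b Y X)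
    (hcomm : ∀ X Y : V, b (Ric X) Y = b X (Ric Y)) :
    ∀ X Y Z W : V, b (R Y Z W) X + b (R Z X W) Y + b (R X Y W) Z = 0 := by
  obtain rfl := eq_quasiConstCurvature_of_inner hR
  have hTT : ⟪T, T⟫ = 1 := by rw [real_inner_self_eq_norm_sq, hT, one_pow]
  have hbT := mul_apply_eq_of_commute hTT (ricci_eq_of_quasiConstCurvature e hTT hRicdef) hcomm
  have hn : (2 : ℝ) - Fintype.card (Fin (Module.finrank ℝ V)) ≠ 0 := by
    rw [Fintype.card_fin, sub_ne_zero]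
    exact_mod_cast hdim.symm
  exact cyclic_sum_quasiConstCurvature hbsymm fun Y =>
    mul_left_cancel₀ hn (by linear_combination hbT Y)
end

section
/- Let R and R̄ be two quadrilinear curvature tensors on a finite-dimensional real inner product space related by a projective (geodesic) deformation: R̄(X,Y,Z,W) = R(X,Y,Z,W) + g(X,W)P(Y,Z) − g(Y,W)P(X,Z) for some symmetric bilinear form P. Then for every symmetric bilinear form b, the compatibility defects agree: b(R̄(Y,Z)W,X) + b(R̄(Z,X)W,Y) + b(R̄(X,Y)W,Z) = b(R(Y,Z)W,X) + b(R(Z,X)W,Y) + b(R(X,Y)W,Z). In particular, b is R-compatible if and only if b is R̄-compatible. -/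
open RealInnerProductSpace

/-!
Substituting `R̄(X,Y)W = R(X,Y)W + P(Y,W) X − P(X,W) Y` into the cyclic sum, the `P`-terms
group as `P(X,W) (b(Z,Y) − b(Y,Z))` and its two cyclic permutations, which vanish because `b`
is symmetric.
-/

section CompatibilityDefect

variable {K V : Type*} [CommRing K] [AddCommGroup V] [Module K V]

/-- `b` is `R`-compatible when this vanishes identically. -/
def compatibilityDefect (b : V →ₗ[K] V →ₗ[K] K) (R : V → V → V → V) (X Y Z W : V) : K :=
  b (R Y Z W) X + b (R Z X W) Y + b (R X Y W) Z

theorem compatibilityDefect_projectiveChange (b : V →ₗ[K] V →ₗ[K] K)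
    (hb : ∀ X Y : V, b X Y = b Y X) (R R' : V → V → V → V) (P : V → V → K)
    (hrel : ∀ X Y Z : V, R' X Y Z = R X Y Z + P Y Z • X - P X Z • Y) (X Y Z W : V) :
    compatibilityDefect b R' X Y Z W = compatibilityDefect b R X Y Z W := by
  simp only [compatibilityDefect, hrel, map_add, map_sub, map_smul, LinearMap.add_apply,
    LinearMap.sub_apply, LinearMap.smul_apply, smul_eq_mul]
  rw [hb Y X, hb Z X, hb Z Y]
  ring

end CompatibilityDefect

theorem geodesic_mapping_preserves_compatibility_general
    {V : Type*} [NormedAddCommGroup V] [InnerProductSpace ℝ V]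
    (R R' : V → V → V → V)
    (P : V →ₗ[ℝ] V →ₗ[ℝ] ℝ)
    (hrel : ∀ X Y Z : V, R' X Y Z = R X Y Z + P Y Z • X - P X Z • Y)
    (b : V →ₗ[ℝ] V →ₗ[ℝ] ℝ)
    (hbsymm : ∀ X Y : V, b X Y = b Y X) :
    (∀ X Y Z W : V,
      b (R' Y Z W) X + b (R' Z X W) Y + b (R' X Y W) Z =
        b (R Y Z W) X + b (R Z X W) Y + b (R X Y W) Z) ∧
    ((∀ X Y Z W : V, b (R Y Z W) X + b (R Z X W) Y + b (R X Y W) Z = 0) ↔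
      (∀ X Y Z W : V, b (R' Y Z W) X + b (R' Z X W) Y + b (R' X Y W) Z = 0)) := by
  have hdefect := compatibilityDefect_projectiveChange b hbsymm R R' (fun X Y => P X Y) hrel
  refine ⟨hdefect, forall₄_congr fun X Y Z W => ?_⟩
  rw [← compatibilityDefect, ← compatibilityDefect, hdefect]

/-- Projective (geodesic) deformations preserve the compatibility defect: if
`R̄(X,Y)Z = R(X,Y)Z + P(Y,Z) X − P(X,Z) Y` with `P` symmetric, then for every symmetric
bilinear form `b` the compatibility defects of `R` and `R̄` agree; in particular `b` is
`R`-compatible iff it is `R̄`-compatible. -/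
theorem geodesic_mapping_preserves_compatibility
    {V : Type*} [NormedAddCommGroup V] [InnerProductSpace ℝ V] [FiniteDimensional ℝ V]
    (R R' : V → V → V → V)
    (P : V →ₗ[ℝ] V →ₗ[ℝ] ℝ)
    (hPsymm : ∀ X Y : V, P X Y = P Y X)
    (hrel : ∀ X Y Z : V, R' X Y Z = R X Y Z + P Y Z • X - P X Z • Y)
    (b : V →ₗ[ℝ] V →ₗ[ℝ] ℝ)
    (hbsymm : ∀ X Y : V, b X Y = b Y X) :
    (∀ X Y Z W : V,
      b (R' Y Z W) X + b (R' Z X W) Y + b (R' X Y W) Z =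
        b (R Y Z W) X + b (R Z X W) Y + b (R X Y W) Z) ∧
    ((∀ X Y Z W : V, b (R Y Z W) X + b (R Z X W) Y + b (R X Y W) Z = 0) ↔
      (∀ X Y Z W : V, b (R' Y Z W) X + b (R' Z X W) Y + b (R' X Y W) Z = 0)) :=
  geodesic_mapping_preserves_compatibility_general R R' P hrel b hbsymm
end

section
/- Let K be an 'ABC' curvature tensor built from a curvature tensor R with Ricci form ric and scalar curvature S on an n-dimensional inner product space: K(X,Y,Z,W) = R(X,Y,Z,W) + A(g(X,W)ric(Y,Z) − g(Y,W)ric(X,Z)) + B(ric(X,W)g(Y,Z) − ric(Y,W)g(X,Z)) + C·S(g(X,W)g(Y,Z) − g(Y,W)g(X,Z)). If a symmetric bilinear form b is R-compatible, then b is K-compatible. -/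
open RealInnerProductSpace

/-!
Contracting the `R`-compatibility identity over an orthonormal basis shows that `b` commutes
with the Ricci operator, `ric(Y, b X) = ric(X, b Y)`: the middle term of the contraction is
the trace of an antisymmetric form against the symmetric operator `b`, hence zero. The terms
that `K` adds to `R` are then `b`-compatible term by term: the `A`- and `C`-terms because
`b` is symmetric, the `B`-term because `b` commutes with the Ricci operator.
-/

section

variable {ι V : Type*} [Fintype ι] [NormedAddCommGroup V] [InnerProductSpace ℝ V]

theorem OrthonormalBasis.sum_apply_isSymmetric_comm (e : OrthonormalBasis ι ℝ V)
    (β : V →ₗ[ℝ] V →ₗ[ℝ] ℝ) {T : V →ₗ[ℝ] V} (hT : T.IsSymmetric) :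
    ∑ i, β (e i) (T (e i)) = ∑ i, β (T (e i)) (e i) := by
  have expand : ∀ i, T (e i) = ∑ j, ⟪e j, T (e i)⟫ • e j := fun i => (e.sum_repr' _).symm
  calc ∑ i, β (e i) (T (e i)) = ∑ i, ∑ j, ⟪e j, T (e i)⟫ * β (e i) (e j) := by
        refine Finset.sum_congr rfl fun i _ => ?_
        conv_lhs => rw [expand i]
        simp only [map_sum, map_smul, smul_eq_mul]
    _ = ∑ j, ∑ i, ⟪e i, T (e j)⟫ * β (e i) (e j) := by
        rw [Finset.sum_comm]
        refine Finset.sum_congr rfl fun j _ => Finset.sum_congr rfl fun i _ => ?_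
        rw [← hT, real_inner_comm]
    _ = ∑ i, β (T (e i)) (e i) := by
        refine Finset.sum_congr rfl fun j _ => ?_
        conv_rhs => rw [expand j]
        simp only [map_sum, map_smul, LinearMap.sum_apply,
          LinearMap.smul_apply, smul_eq_mul]

theorem OrthonormalBasis.sum_apply_isSymmetric_eq_zero_of_antisymm
    (e : OrthonormalBasis ι ℝ V) (β : V →ₗ[ℝ] V →ₗ[ℝ] ℝ) (hβ : ∀ u v, β u v = -β v u)
    {T : V →ₗ[ℝ] V} (hT : T.IsSymmetric) : ∑ i, β (e i) (T (e i)) = 0 := by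
  have h := e.sum_apply_isSymmetric_comm β hT
  simp_rw [hβ (T _)] at h
  rw [Finset.sum_neg_distrib] at h
  linarith

theorem ricci_apply_comm_of_compatible (e : OrthonormalBasis ι ℝ V)
    (R : V →ₗ[ℝ] V →ₗ[ℝ] V →ₗ[ℝ] V →ₗ[ℝ] ℝ)
    (hanti1 : ∀ X Y Z W : V, R X Y Z W = - R Y X Z W)
    (hanti2 : ∀ X Y Z W : V, R X Y Z W = - R X Y W Z)
    {T : V →ₗ[ℝ] V} (hT : T.IsSymmetric)
    (hcompat : ∀ X Y Z W : V, R Y Z W (T X) + R Z X W (T Y) + R X Y W (T Z) = 0) (X Y : V) :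
    ∑ i, R (e i) Y (T X) (e i) = ∑ i, R (e i) X (T Y) (e i) := by
  have contracted := Finset.sum_eq_zero (s := Finset.univ) fun i _ => hcompat X (e i) Y (e i)
  rw [Finset.sum_add_distrib, Finset.sum_add_distrib,
    e.sum_apply_isSymmetric_eq_zero_of_antisymm (R Y X) (hanti2 Y X) hT] at contracted
  have first : ∑ i, R (e i) Y (e i) (T X) = -∑ i, R (e i) Y (T X) (e i) := by
    rw [← Finset.sum_neg_distrib]
    exact Finset.sum_congr rfl fun i _ => hanti2 _ _ _ _
  have third : ∑ i, R X (e i) (e i) (T Y) = ∑ i, R (e i) X (T Y) (e i) :=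
    Finset.sum_congr rfl fun i _ => by rw [hanti1, hanti2, neg_neg]
  linarith

end

theorem K_compatible_of_R_compatible_ABC_general
    {V : Type*} [NormedAddCommGroup V] [InnerProductSpace ℝ V]
    (e : OrthonormalBasis (Fin (Module.finrank ℝ V)) ℝ V)
    (R : V →ₗ[ℝ] V →ₗ[ℝ] V →ₗ[ℝ] V →ₗ[ℝ] ℝ)
    (hanti1 : ∀ X Y Z W : V, R X Y Z W = - R Y X Z W)
    (hanti2 : ∀ X Y Z W : V, R X Y Z W = - R X Y W Z)
    (ric : V → V → ℝ)
    (hric : ∀ X Y : V, ric X Y = ∑ a, R (e a) X Y (e a))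
    (S : ℝ)
    (A B C : ℝ)
    (K : V → V → V → V → ℝ)
    (hK : ∀ X Y Z W : V,
      K X Y Z W = R X Y Z W
        + A * (⟪X, W⟫ * ric Y Z - ⟪Y, W⟫ * ric X Z)
        + B * (ric X W * ⟪Y, Z⟫ - ric Y W * ⟪X, Z⟫)
        + C * S * (⟪X, W⟫ * ⟪Y, Z⟫ - ⟪Y, W⟫ * ⟪X, Z⟫))
    (b : V →ₗ[ℝ] V →ₗ[ℝ] ℝ)
    (hbsymm : ∀ X Y : V, b X Y = b Y X)
    (Bop : V →ₗ[ℝ] V)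
    (hBop : ∀ X Y : V, b X Y = ⟪Bop X, Y⟫)
    -- `b` is `R`-compatible: `b(R(Y,Z)W, X) + b(R(Z,X)W, Y) + b(R(X,Y)W, Z) = 0`:
    (hRcompat : ∀ X Y Z W : V,
      R Y Z W (Bop X) + R Z X W (Bop Y) + R X Y W (Bop Z) = 0) :
    -- `b` is `K`-compatible:
    ∀ X Y Z W : V,
      K Y Z W (Bop X) + K Z X W (Bop Y) + K X Y W (Bop Z) = 0 := by
  have hBop_symm : Bop.IsSymmetric := fun U W => by
    rw [← hBop, hbsymm, hBop, real_inner_comm]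
  have hs : ∀ U W : V, ⟪U, Bop W⟫ = ⟪W, Bop U⟫ := fun U W => by
    rw [← hBop_symm, real_inner_comm]
  have hr : ∀ X Y : V, ric Y (Bop X) = ric X (Bop Y) := fun X Y => by
    simpa only [hric] using ricci_apply_comm_of_compatible e R hanti1 hanti2 hBop_symm hRcompat X Y
  intro X Y Z W
  rw [hK, hK, hK]
  linear_combination hRcompat X Y Z W
    + (A * ric Z W + C * S * ⟪Z, W⟫) * hs Y X
    + (A * ric Y W + C * S * ⟪Y, W⟫) * hs X Z
    + (A * ric X W + C * S * ⟪X, W⟫) * hs Z Y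
    + B * ⟪Z, W⟫ * hr X Y
    + B * ⟪Y, W⟫ * hr Z X
    + B * ⟪X, W⟫ * hr Y Z

/-- If a symmetric bilinear form `b` is `R`-compatible, then `b` is `K`-compatible for
any `ABC` curvature tensor `K` built from `R`. -/
theorem K_compatible_of_R_compatible_ABC
    {V : Type*} [NormedAddCommGroup V] [InnerProductSpace ℝ V] [FiniteDimensional ℝ V]
    (e : OrthonormalBasis (Fin (Module.finrank ℝ V)) ℝ V)
    (R : V →ₗ[ℝ] V →ₗ[ℝ] V →ₗ[ℝ] V →ₗ[ℝ] ℝ)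
    (hanti1 : ∀ X Y Z W : V, R X Y Z W = - R Y X Z W)
    (hanti2 : ∀ X Y Z W : V, R X Y Z W = - R X Y W Z)
    (hpair : ∀ X Y Z W : V, R X Y Z W = R Z W X Y)
    (hbianchi : ∀ X Y Z W : V, R X Y Z W + R Y Z X W + R Z X Y W = 0)
    (ric : V → V → ℝ)
    (hric : ∀ X Y : V, ric X Y = ∑ a, R (e a) X Y (e a))
    (S : ℝ) (hS : S = ∑ a, ric (e a) (e a))
    (A B C : ℝ)
    (K : V → V → V → V → ℝ)
    (hK : ∀ X Y Z W : V,
      K X Y Z W = R X Y Z W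
        + A * (⟪X, W⟫ * ric Y Z - ⟪Y, W⟫ * ric X Z)
        + B * (ric X W * ⟪Y, Z⟫ - ric Y W * ⟪X, Z⟫)
        + C * S * (⟪X, W⟫ * ⟪Y, Z⟫ - ⟪Y, W⟫ * ⟪X, Z⟫))
    (b : V →ₗ[ℝ] V →ₗ[ℝ] ℝ)
    (hbsymm : ∀ X Y : V, b X Y = b Y X)
    (Bop : V →ₗ[ℝ] V)
    (hBop : ∀ X Y : V, b X Y = ⟪Bop X, Y⟫)
    -- `b` is `R`-compatible: `b(R(Y,Z)W, X) + b(R(Z,X)W, Y) + b(R(X,Y)W, Z) = 0`: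
    (hRcompat : ∀ X Y Z W : V,
      R Y Z W (Bop X) + R Z X W (Bop Y) + R X Y W (Bop Z) = 0) :
    -- `b` is `K`-compatible:
    ∀ X Y Z W : V,
      K Y Z W (Bop X) + K Z X W (Bop Y) + K X Y W (Bop Z) = 0 :=
  K_compatible_of_R_compatible_ABC_general e R hanti1 hanti2 ric hric S A B C K hK b hbsymm Bop hBop
    hRcompat
end

section
/- Let C be a quadrilinear tensor on a 4-dimensional oriented Lorentzian (or inner product) vector space with the symmetries of the Weyl tensor, and T a symmetric bilinear form that is C-compatible: T(C(Y,Z)W,X) + T(C(Z,X)W,Y) + T(C(X,Y)W,Z) = 0. Then the 'magnetic part' of C with respect to T vanishes: Σ_{i,j,k} ε(e_i,e_j,e_k,P) T(e_i, e_m) C(e_j,e_k, ·, e_m) summed appropriately gives zero, i.e. ε^{ijk}{}_p T_i{}^m C_{jk l m} = 0 for all l, p. -/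
/-!
Contract the index `m` first: `Σ_m T(eᵢ, e_m) C(eⱼ, e_k, L, e_m) = C(eⱼ, e_k, L, T eᵢ)`.
The remaining triple sum pairs `ε(eᵢ, eⱼ, e_k, P)`, which is invariant under cyclic
permutations of `(i, j, k)`, with `C(eⱼ, e_k, L, T eᵢ)`, whose cyclic sum vanishes by
`C`-compatibility. Summing over the three cyclic relabellings therefore gives three
times the sum on one side and zero on the other.
-/

open RealInnerProductSpace

lemma AlternatingMap.map_cycle_three {R M N : Type*} [CommRing R] [AddCommGroup M]
    [Module R M] [AddCommGroup N] [Module R N] (g : M [⋀^Fin 4]→ₗ[R] N) (a b c d : M) :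
    g ![b, c, a, d] = g ![a, b, c, d] := by
  have hσ : ![b, c, a, d] =
      ![a, b, c, d] ∘ (Equiv.swap 0 1 * Equiv.swap 1 2 : Equiv.Perm (Fin 4)) := by
    ext i; fin_cases i <;> rfl
  rw [hσ, g.map_perm, show Equiv.Perm.sign
    (Equiv.swap 0 1 * Equiv.swap 1 2 : Equiv.Perm (Fin 4)) = 1 by decide, one_smul]

lemma Finset.sum_sum_sum_rotate {ι M : Type*} [Fintype ι] [AddCommMonoid M]
    (f : ι → ι → ι → M) :
    ∑ i, ∑ j, ∑ k, f j k i = ∑ i, ∑ j, ∑ k, f i j k := by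
  rw [Finset.sum_comm]
  exact Finset.sum_congr rfl fun _ _ => Finset.sum_comm

lemma Finset.sum_sum_sum_mul_eq_zero_of_cyclic {ι K : Type*} [Fintype ι] [Field K]
    [CharZero K] (a b : ι → ι → ι → K) (ha : ∀ i j k, a j k i = a i j k)
    (hb : ∀ i j k, b i j k + b j k i + b k i j = 0) :
    ∑ i, ∑ j, ∑ k, a i j k * b i j k = 0 := by
  set f := fun i j k => a i j k * b i j k
  have hcyclic_sum : ∑ i, ∑ j, ∑ k, (f i j k + f j k i + f k i j) = 0 := by
    refine Finset.sum_eq_zero fun i _ => Finset.sum_eq_zero fun j _ =>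
      Finset.sum_eq_zero fun k _ => ?_
    simp only [f, ha, ← mul_add, hb, mul_zero]
  simp only [Finset.sum_add_distrib, Finset.sum_sum_sum_rotate f,
    ← Finset.sum_sum_sum_rotate fun i j k => f k i j] at hcyclic_sum
  have : (3 : K) * ∑ i, ∑ j, ∑ k, f i j k = 0 := by linear_combination hcyclic_sum
  simpa using this

lemma OrthonormalBasis.sum_inner_mul_apply {ι V : Type*} [Fintype ι] [NormedAddCommGroup V]
    [InnerProductSpace ℝ V] (e : OrthonormalBasis ι ℝ V) (φ : V →ₗ[ℝ] ℝ) (v : V) :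
    ∑ m, ⟪v, e m⟫ * φ (e m) = φ v := by
  conv_rhs => rw [← e.sum_repr' v]
  simp [real_inner_comm]

theorem magnetic_part_vanishes_of_weyl_compatible_general
    {V : Type*} [NormedAddCommGroup V] [InnerProductSpace ℝ V]
    (eps : V [⋀^Fin 4]→ₗ[ℝ] ℝ)
    (e : OrthonormalBasis (Fin 4) ℝ V)
    (C : V →ₗ[ℝ] V →ₗ[ℝ] V →ₗ[ℝ] V →ₗ[ℝ] ℝ)
    (T : V →ₗ[ℝ] V →ₗ[ℝ] ℝ)
    (Top : V →ₗ[ℝ] V)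
    (hTop : ∀ X Y : V, T X Y = ⟪Top X, Y⟫)
    -- `T` is `C`-compatible:
    (hcompat : ∀ X Y Z W : V,
      C Y Z W (Top X) + C Z X W (Top Y) + C X Y W (Top Z) = 0) :
    -- the magnetic part of `C` with respect to `T` vanishes:
    ∀ L P : V,
      (∑ i, ∑ j, ∑ k, ∑ m,
        eps ![e i, e j, e k, P] * T (e i) (e m) * C (e j) (e k) L (e m)) = 0 := by
  intro L P
  have hcontract : ∀ i j k, ∑ m, eps ![e i, e j, e k, P] * T (e i) (e m) * C (e j) (e k) L (e m)
      = eps ![e i, e j, e k, P] * C (e j) (e k) L (Top (e i)) := fun i j k => by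
    simp only [hTop, mul_assoc, ← Finset.mul_sum, e.sum_inner_mul_apply]
  simp only [hcontract]
  exact Finset.sum_sum_sum_mul_eq_zero_of_cyclic _ _
    (fun i j k => eps.map_cycle_three (e i) (e j) (e k) P)
    (fun i j k => hcompat (e i) (e j) (e k) L)

theorem magnetic_part_vanishes_of_weyl_compatible
    {V : Type*} [NormedAddCommGroup V] [InnerProductSpace ℝ V] [FiniteDimensional ℝ V]
    (hdim : Module.finrank ℝ V = 4)
    (eps : V [⋀^Fin 4]→ₗ[ℝ] ℝ) (hvol : eps ≠ 0)
    (e : OrthonormalBasis (Fin 4) ℝ V)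
    (C : V →ₗ[ℝ] V →ₗ[ℝ] V →ₗ[ℝ] V →ₗ[ℝ] ℝ)
    (hanti1 : ∀ X Y Z W : V, C X Y Z W = - C Y X Z W)
    (hanti2 : ∀ X Y Z W : V, C X Y Z W = - C X Y W Z)
    (hpair : ∀ X Y Z W : V, C X Y Z W = C Z W X Y)
    (hbianchi : ∀ X Y Z W : V, C X Y Z W + C Y Z X W + C Z X Y W = 0)
    (T : V →ₗ[ℝ] V →ₗ[ℝ] ℝ)
    (hTsymm : ∀ X Y : V, T X Y = T Y X)
    (Top : V →ₗ[ℝ] V)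
    (hTop : ∀ X Y : V, T X Y = ⟪Top X, Y⟫)
    -- `T` is `C`-compatible:
    (hcompat : ∀ X Y Z W : V,
      C Y Z W (Top X) + C Z X W (Top Y) + C X Y W (Top Z) = 0) :
    -- the magnetic part of `C` with respect to `T` vanishes:
    ∀ L P : V,
      (∑ i, ∑ j, ∑ k, ∑ m,
        eps ![e i, e j, e k, P] * T (e i) (e m) * C (e j) (e k) L (e m)) = 0 :=
  magnetic_part_vanishes_of_weyl_compatible_general eps e C T Top hTop hcompat
end

section
/- Let K be a multilinear map V³ → V with values interpreted as a (1,3) curvature-type tensor on a finite-dimensional inner product space, possessing the symmetries of a generalized curvature tensor, and let B be a self-adjoint endomorphism that is K-compatible. If a self-adjoint endomorphism H commutes with B, then the symmetric bilinear form K̊(Y,Z) = Σ_{a,b} ⟨H eₐ, e_b⟩ K(eₐ, Y, Z, e_b) commutes with B: K̊(BY, Z) = K̊(Y, BZ). -/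
/-!
Write `K̊ = T_H` with `T_A(Y, Z) = ∑ₐ K(eₐ, Y, Z, A eₐ)`. For a self-adjoint `A` one has
`∑ₐ β(A eₐ, eₐ) = ∑ₐ β(eₐ, A eₐ)` for every bilinear form `β`, so a form antisymmetric in the two
slots fed by `eₐ` and `A eₐ` contracts to zero, and a self-adjoint `B` in one slot can be moved
onto `A`. Summing the compatibility identity over `(X, W) = (eₐ, H eₐ)` therefore gives
`T_H(BY, Z) = T_{HB}(Z, Y)`, and summing it over `(X, W) = (H eₐ, eₐ)` with `Y, Z` exchanged gives
`T_H(Y, BZ) = T_{HB}(Z, Y)`, using `BH = HB`.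
-/

open RealInnerProductSpace

namespace OrthonormalBasis

variable {ι V : Type*} [Fintype ι] [NormedAddCommGroup V] [InnerProductSpace ℝ V]

theorem sum_bilin_apply_eq_sum_inner_mul (e : OrthonormalBasis ι ℝ V)
    (β : LinearMap.BilinForm ℝ V) (A : V →ₗ[ℝ] V) :
    ∑ a, β (e a) (A (e a)) = ∑ a, ∑ b, ⟪A (e a), e b⟫ * β (e a) (e b) := by
  refine Finset.sum_congr rfl fun a _ => ?_
  conv_lhs => rw [← e.sum_repr' (A (e a))]
  simp only [map_sum, map_smul, smul_eq_mul, real_inner_comm]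

theorem sum_bilin_apply_left_eq_right (e : OrthonormalBasis ι ℝ V)
    (β : LinearMap.BilinForm ℝ V) {A : V →ₗ[ℝ] V} (hA : A.IsSymmetric) :
    ∑ a, β (A (e a)) (e a) = ∑ a, β (e a) (A (e a)) := by
  have h := e.sum_bilin_apply_eq_sum_inner_mul β.flip A
  simp only [LinearMap.BilinForm.flip_apply] at h
  rw [h, e.sum_bilin_apply_eq_sum_inner_mul β A, Finset.sum_comm]
  refine Finset.sum_congr rfl fun a _ => Finset.sum_congr rfl fun b _ => ?_
  rw [hA, real_inner_comm]

theorem sum_bilin_apply_eq_zero_of_antisymm (e : OrthonormalBasis ι ℝ V)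
    {β : LinearMap.BilinForm ℝ V} (hβ : ∀ x y, β x y = -β y x) {A : V →ₗ[ℝ] V}
    (hA : A.IsSymmetric) :
    ∑ a, β (e a) (A (e a)) = 0 := by
  have h := e.sum_bilin_apply_left_eq_right β hA
  simp only [hβ (A _), Finset.sum_neg_distrib] at h
  linarith

end OrthonormalBasis

section CurvatureContraction

variable {ι V : Type*} [Fintype ι] [NormedAddCommGroup V] [InnerProductSpace ℝ V]

noncomputable def curvatureContraction (e : OrthonormalBasis ι ℝ V)
    (K : V →ₗ[ℝ] V →ₗ[ℝ] V →ₗ[ℝ] V →ₗ[ℝ] ℝ) (A : V →ₗ[ℝ] V) (Y Z : V) : ℝ :=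
  ∑ a, K (e a) Y Z (A (e a))

variable (e : OrthonormalBasis ι ℝ V) (K : V →ₗ[ℝ] V →ₗ[ℝ] V →ₗ[ℝ] V →ₗ[ℝ] ℝ)

theorem curvatureContraction_eq_sum_inner_mul (A : V →ₗ[ℝ] V) (Y Z : V) :
    curvatureContraction e K A Y Z = ∑ a, ∑ b, ⟪A (e a), e b⟫ * K (e a) Y Z (e b) :=
  e.sum_bilin_apply_eq_sum_inner_mul ((K.flip Y).flip Z) A

theorem sum_apply_comp_left_eq_curvatureContraction {B : V →ₗ[ℝ] V} (hB : B.IsSymmetric)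
    (A : V →ₗ[ℝ] V) (Y Z : V) :
    ∑ a, K (B (e a)) Y Z (A (e a)) = curvatureContraction e K (A ∘ₗ B) Y Z := by
  rw [curvatureContraction]
  have h := e.sum_bilin_apply_left_eq_right (((K.flip Y).flip Z).compl₂ A) hB
  simpa only [LinearMap.compl₂_apply, LinearMap.flip_apply, LinearMap.comp_apply] using h

theorem curvatureContraction_apply_left_of_compatible
    (hanti1 : ∀ X Y Z W : V, K X Y Z W = -K Y X Z W)
    (hanti2 : ∀ X Y Z W : V, K X Y Z W = -K X Y W Z)
    {B : V →ₗ[ℝ] V} (hB : B.IsSymmetric)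
    (hcompat : ∀ X Y Z W : V, K (B X) Y Z W + K (B Y) Z X W + K (B Z) X Y W = 0)
    {A : V →ₗ[ℝ] V} (hA : A.IsSymmetric) (Y Z : V) :
    curvatureContraction e K A (B Y) Z = curvatureContraction e K (A ∘ₗ B) Z Y := by
  have hsum : ∑ a, (K (B Y) (e a) Z (A (e a)) + K (B (e a)) Z Y (A (e a))
      + K (B Z) Y (e a) (A (e a))) = 0 :=
    Finset.sum_eq_zero fun a _ => hcompat Y (e a) Z (A (e a))
  have hvanish : ∑ a, K (B Z) Y (e a) (A (e a)) = 0 :=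
    e.sum_bilin_apply_eq_zero_of_antisymm (hanti2 (B Z) Y) hA
  simp only [Finset.sum_add_distrib, hanti1 (B Y), Finset.sum_neg_distrib, hvanish,
    sum_apply_comp_left_eq_curvatureContraction e K hB] at hsum
  rw [curvatureContraction]
  linarith

theorem curvatureContraction_apply_right_of_compatible
    (hsym : ∀ X Y Z W : V, K X Y Z W = K W Z Y X)
    (hanti2 : ∀ X Y Z W : V, K X Y Z W = -K X Y W Z)
    {B : V →ₗ[ℝ] V}
    (hcompat : ∀ X Y Z W : V, K (B X) Y Z W + K (B Y) Z X W + K (B Z) X Y W = 0)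
    {A : V →ₗ[ℝ] V} (hA : A.IsSymmetric) (hBA : B ∘ₗ A = A ∘ₗ B) (Y Z : V) :
    curvatureContraction e K A Y (B Z) = curvatureContraction e K (A ∘ₗ B) Z Y := by
  have hsum : ∑ a, (K (B Z) (A (e a)) Y (e a) + K (B (A (e a))) Y Z (e a)
      + K (B Y) Z (A (e a)) (e a)) = 0 :=
    Finset.sum_eq_zero fun a _ => hcompat Z (A (e a)) Y (e a)
  have hvanish : ∑ a, K (B Y) Z (e a) (A (e a)) = 0 :=
    e.sum_bilin_apply_eq_zero_of_antisymm (hanti2 (B Y) Z) hA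
  have hfirst (a : ι) : K (B Z) (A (e a)) Y (e a) = -K (e a) Y (B Z) (A (e a)) := by
    rw [hsym (B Z), hanti2 (e a)]
  simp only [Finset.sum_add_distrib, hfirst, ← LinearMap.comp_apply B A, hBA,
    hsym _ Y Z, hanti2 (B Y) Z (A _), Finset.sum_neg_distrib, hvanish] at hsum
  rw [curvatureContraction, curvatureContraction]
  linarith

end CurvatureContraction

theorem contraction_commutes_of_compatible_general
    {V : Type*} [NormedAddCommGroup V] [InnerProductSpace ℝ V]
    (e : OrthonormalBasis (Fin (Module.finrank ℝ V)) ℝ V)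
    (K : V →ₗ[ℝ] V →ₗ[ℝ] V →ₗ[ℝ] V →ₗ[ℝ] ℝ)
    (hanti1 : ∀ X Y Z W : V, K X Y Z W = - K Y X Z W)
    (hanti2 : ∀ X Y Z W : V, K X Y Z W = - K X Y W Z)
    (hpair : ∀ X Y Z W : V, K X Y Z W = K Z W X Y)
    (B H : V →ₗ[ℝ] V)
    (hB : ∀ X Y : V, ⟪B X, Y⟫ = ⟪X, B Y⟫)
    (hH : ∀ X Y : V, ⟪H X, Y⟫ = ⟪X, H Y⟫)
    (hBH : B ∘ₗ H = H ∘ₗ B)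
    (hcompat : ∀ X Y Z W : V, K (B X) Y Z W + K (B Y) Z X W + K (B Z) X Y W = 0) :
    ∀ Y Z : V,
      (∑ a, ∑ b, ⟪H (e a), e b⟫ * K (e a) (B Y) Z (e b)) =
        ∑ a, ∑ b, ⟪H (e a), e b⟫ * K (e a) Y (B Z) (e b) := by
  intro Y Z
  have hsym (X Y Z W : V) : K X Y Z W = K W Z Y X := by
    rw [hpair, hanti1, hanti2, neg_neg]
  simp only [← curvatureContraction_eq_sum_inner_mul]
  rw [curvatureContraction_apply_left_of_compatible e K hanti1 hanti2 hB hcompat hH,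
    curvatureContraction_apply_right_of_compatible e K hsym hanti2 hcompat hH hBH]

/-- If `K` is a generalized curvature tensor, `B` a self-adjoint `K`-compatible
endomorphism, and `H` a self-adjoint endomorphism commuting with `B`, then the
symmetric bilinear form `K̊(Y,Z) = ∑_{a,b} ⟪H eₐ, e_b⟫ K(eₐ, Y, Z, e_b)` commutes with
`B`: `K̊(BY, Z) = K̊(Y, BZ)`. -/
theorem contraction_commutes_of_compatible
    {V : Type*} [NormedAddCommGroup V] [InnerProductSpace ℝ V] [FiniteDimensional ℝ V]
    (e : OrthonormalBasis (Fin (Module.finrank ℝ V)) ℝ V)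
    (K : V →ₗ[ℝ] V →ₗ[ℝ] V →ₗ[ℝ] V →ₗ[ℝ] ℝ)
    (hanti1 : ∀ X Y Z W : V, K X Y Z W = - K Y X Z W)
    (hanti2 : ∀ X Y Z W : V, K X Y Z W = - K X Y W Z)
    (hpair : ∀ X Y Z W : V, K X Y Z W = K Z W X Y)
    (hbianchi : ∀ X Y Z W : V, K X Y Z W + K Y Z X W + K Z X Y W = 0)
    (B H : V →ₗ[ℝ] V)
    (hB : ∀ X Y : V, ⟪B X, Y⟫ = ⟪X, B Y⟫)
    (hH : ∀ X Y : V, ⟪H X, Y⟫ = ⟪X, H Y⟫)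
    (hBH : B ∘ₗ H = H ∘ₗ B)
    (hcompat : ∀ X Y Z W : V, K (B X) Y Z W + K (B Y) Z X W + K (B Z) X Y W = 0) :
    ∀ Y Z : V,
      (∑ a, ∑ b, ⟪H (e a), e b⟫ * K (e a) (B Y) Z (e b)) =
        ∑ a, ∑ b, ⟪H (e a), e b⟫ * K (e a) Y (B Z) (e b) :=
  contraction_commutes_of_compatible_general e K hanti1 hanti2 hpair B H hB hH hBH hcompat
end
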